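/- arXiv:1806.02758 — 7 statements merged into one kernel-verified Lean document; each statement's English description precedes it below -/
import Mathlib

section
/- Let G be a finite group and let F : rep_ℂ(G) → Vect_ℂ be the forgetful functor from finite-dimensional complex representations of G to finite-dimensional ℂ-vector spaces. The map φ sending g ∈ G to the natural transformation of F whose component at a representation (V, ρ) is the linear map ρ(g) : V → V is a group isomorphism from G onto the group Aut^⊗(F) of monoidal natural automorphisms of F (natural isomorphisms F ⇒ F compatible with the tensor product). -/
open CategoryTheory MonoidalCategory

/-- The forgetful functor from finite-dimensional complex representations of `G` to
finite-dimensional complex vector spaces. -/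
noncomputable abbrev forgetFDRep (G : Type) [Group G] : FDRep ℂ G ⥤ FGModuleCat ℂ :=
  Action.forget (FGModuleCat ℂ) (MonCat.of G)

/-- A natural automorphism `α : F ≅ F` of the forgetful functor is *monoidal* if its
components satisfy `α_{V ⊗ W} = α_V ⊗ α_W` and `α` is the identity on the trivial
(tensor unit) representation. -/
def IsMonoidalAut (G : Type) [Group G] [Fintype G]
    (α : forgetFDRep G ≅ forgetFDRep G) : Prop :=
  (∀ V W : FDRep ℂ G, α.hom.app (V ⊗ W) = (α.hom.app V ⊗ₘ α.hom.app W)) ∧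
    α.hom.app (𝟙_ (FDRep ℂ G)) = 𝟙 _

namespace TannakaAux

open Finsupp
open scoped Classical

set_option linter.unusedSectionVars false

variable {G : Type} [Group G] [Fintype G]

/-- The left regular representation of `G` on `G →₀ ℂ`. -/
noncomputable def regRep (G : Type) [Group G] : Representation ℂ G (G →₀ ℂ) where
  toFun g := Finsupp.lmapDomain ℂ ℂ (g • ·)
  map_one' := by ext; simp
  map_mul' x y := by ext; simp [mul_smul, mul_assoc]

@[simp] lemma regRep_single (g x : G) (r : ℂ) :
    regRep G g (Finsupp.single x r) = Finsupp.single (g • x) r := by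
  simp [regRep]

/-- The left regular representation of `G` on `G →₀ ℂ`. -/
noncomputable abbrev regA (G : Type) [Group G] [Fintype G] : FDRep ℂ G :=
  FDRep.of (regRep G)

local notation "ρreg" => regRep G

/-- Counit: sum of coefficients. -/
noncomputable def epsHom : (G →₀ ℂ) →ₗ[ℂ] ℂ := Finsupp.lsum ℂ fun _ => LinearMap.id

/-- Comultiplication: `single x r ↦ r • (single x 1 ⊗ single x 1)`. -/
noncomputable def deltaHom : (G →₀ ℂ) →ₗ[ℂ] TensorProduct ℂ (G →₀ ℂ) (G →₀ ℂ) :=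
  Finsupp.lsum ℂ fun x => LinearMap.toSpanSingleton ℂ _
    (Finsupp.single x (1:ℂ) ⊗ₜ[ℂ] Finsupp.single x (1:ℂ))

@[simp] lemma epsHom_single (x : G) (r : ℂ) : epsHom (Finsupp.single x r) = r := by
  simp [epsHom]

@[simp] lemma deltaHom_single (x : G) (r : ℂ) :
    deltaHom (Finsupp.single x r)
      = r • (Finsupp.single x (1:ℂ) ⊗ₜ[ℂ] Finsupp.single x (1:ℂ)) := by
  simp [deltaHom]

lemma epsHom_comm (g : G) : epsHom.comp (ρreg g) = epsHom := by
  refine Finsupp.lhom_ext fun x r => ?_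
  simp [regRep_single]

lemma deltaHom_comm (g : G) :
    deltaHom.comp (ρreg g) = (TensorProduct.map (ρreg g) (ρreg g)).comp deltaHom := by
  refine Finsupp.lhom_ext fun x r => ?_
  simp [regRep_single, TensorProduct.map_tmul]

/-- The counit as a morphism of representations. -/
noncomputable def eps : regA G ⟶ 𝟙_ (FDRep ℂ G) where
  hom := FGModuleCat.ofHom epsHom
  comm g := FGModuleCat.hom_ext (epsHom_comm (G := G) g)

/-- The comultiplication as a morphism of representations. -/
noncomputable def delta : regA G ⟶ regA G ⊗ regA G where
  hom := FGModuleCat.ofHom deltaHom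
  comm g := FGModuleCat.hom_ext (deltaHom_comm (G := G) g)

/-- `single x r ↦ r • ρ(x) v`, an equivariant map `regA ⟶ X`. -/
noncomputable def phiHom (X : FDRep ℂ G) (v : X) : (G →₀ ℂ) →ₗ[ℂ] X :=
  Finsupp.lsum ℂ fun x => LinearMap.toSpanSingleton ℂ _ (X.ρ x v)

@[simp] lemma phiHom_single (X : FDRep ℂ G) (v : X) (x : G) (r : ℂ) :
    phiHom X v (Finsupp.single x r) = r • X.ρ x v := by
  simp [phiHom]

lemma phiHom_comm (X : FDRep ℂ G) (v : X) (g : G) :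
    (phiHom X v).comp (ρreg g) = (X.ρ g).comp (phiHom X v) := by
  refine Finsupp.lhom_ext fun x r => ?_
  simp [regRep_single, map_mul]

/-- The matrix-coefficient morphism of representations. -/
noncomputable def phi (X : FDRep ℂ G) (v : X) : regA G ⟶ X where
  hom := FGModuleCat.ofHom (phiHom X v)
  comm g := FGModuleCat.hom_ext (phiHom_comm X v g)

/-! ### The forward map `g ↦ (ρ(g))_X` -/

/-- Component of the natural isomorphism attached to `g`. -/
noncomputable def tApp (g : G) (X : FDRep ℂ G) :
    (forgetFDRep G).obj X ≅ (forgetFDRep G).obj X where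
  hom := FGModuleCat.ofHom (X.ρ g)
  inv := FGModuleCat.ofHom (X.ρ g⁻¹)
  hom_inv_id := by
    refine FGModuleCat.hom_ext ?_
    show (X.ρ g⁻¹).comp (X.ρ g) = LinearMap.id
    rw [← Module.End.mul_eq_comp, ← map_mul]
    simp [Module.End.one_eq_id]
  inv_hom_id := by
    refine FGModuleCat.hom_ext ?_
    show (X.ρ g).comp (X.ρ g⁻¹) = LinearMap.id
    rw [← Module.End.mul_eq_comp, ← map_mul]
    simp [Module.End.one_eq_id]

/-- The natural isomorphism attached to `g`. -/
noncomputable def tIso (g : G) : forgetFDRep G ≅ forgetFDRep G :=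
  NatIso.ofComponents (tApp g) (fun f => FGModuleCat.hom_ext (congrArg (fun m => m.hom.hom) (f.comm g)).symm)

lemma tIso_monoidal (g : G) : IsMonoidalAut G (tIso g) := ⟨fun _ _ => rfl, rfl⟩

/-! ### Extraction of the group element from a monoidal automorphism -/

lemma nat_apply (α : forgetFDRep G ≅ forgetFDRep G) {X Y : FDRep ℂ G} (f : X ⟶ Y) (v : X) :
    α.hom.app Y (f.hom v) = f.hom (α.hom.app X v) :=
  ConcreteCategory.congr_hom (α.hom.naturality f) v

variable (α : forgetFDRep G ≅ forgetFDRep G)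

/-- The image of `single 1 1` under the component of `α` at the regular representation. -/
noncomputable def uu : G →₀ ℂ := α.hom.app (regA G) (Finsupp.single (1:G) (1:ℂ))

lemma eps_uu (hα : IsMonoidalAut G α) : epsHom (uu α) = 1 := by
  have h := nat_apply α (eps (G := G)) (Finsupp.single (1:G) (1:ℂ))
  rw [hα.2] at h
  have h2 : epsHom (Finsupp.single (1:G) (1:ℂ)) = epsHom (uu α) := h
  rw [← h2, epsHom_single]

lemma delta_uu (hα : IsMonoidalAut G α) :
    deltaHom (uu α) = (uu α) ⊗ₜ[ℂ] (uu α) := by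
  have h := nat_apply α (delta (G := G)) (Finsupp.single (1:G) (1:ℂ))
  rw [hα.1] at h
  have h2 : TensorProduct.map (α.hom.app (regA G)).hom.hom (α.hom.app (regA G)).hom.hom
      (deltaHom (Finsupp.single (1:G) (1:ℂ))) = deltaHom (uu α) := h
  rw [deltaHom_single, one_smul] at h2
  exact h2.symm.trans (TensorProduct.map_tmul _ _ _ _)

/-- The evaluation bilinear form on the tensor square. -/
noncomputable def evE (x y : G) : TensorProduct ℂ (G →₀ ℂ) (G →₀ ℂ) →ₗ[ℂ] ℂ :=
  TensorProduct.lift ((LinearMap.mul ℂ ℂ).compl₁₂ (Finsupp.lapply x) (Finsupp.lapply y))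

@[simp] lemma evE_tmul (x y : G) (a b : G →₀ ℂ) : evE x y (a ⊗ₜ[ℂ] b) = a x * b y := by
  simp [evE]

lemma evE_deltaHom (x y : G) (u : G →₀ ℂ) :
    evE x y (deltaHom u) = if x = y then u x else 0 := by
  rw [deltaHom, Finsupp.lsum_apply, map_finsuppSum]
  have key : ∀ z : G, ∀ r : ℂ, evE x y (LinearMap.toSpanSingleton ℂ
      (TensorProduct ℂ (G →₀ ℂ) (G →₀ ℂ))
      (Finsupp.single z (1:ℂ) ⊗ₜ[ℂ] Finsupp.single z (1:ℂ)) r)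
      = r * ((if z = x then (1:ℂ) else 0) * (if z = y then (1:ℂ) else 0)) := by
    intro z r
    rw [LinearMap.toSpanSingleton_apply, map_smul, evE_tmul, Finsupp.single_apply,
      Finsupp.single_apply, smul_eq_mul]
  rw [Finsupp.sum_congr (g2 := fun z r =>
    r * ((if z = x then (1:ℂ) else 0) * (if z = y then (1:ℂ) else 0)))
    (fun z _ => key z (u z))]
  rw [Finsupp.sum_fintype _ _ (by intro z; simp)]
  by_cases h : x = y
  · subst h
    simp [mul_ite, ite_and]
  · rw [Finset.sum_eq_zero, if_neg h]
    intro z _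
    by_cases hzx : z = x
    · subst hzx
      have : ¬ z = y := fun hzy => h (hzy ▸ rfl)
      simp [this]
    · simp [hzx]

lemma exists_single (u : G →₀ ℂ) (hd : deltaHom u = u ⊗ₜ[ℂ] u) (he : epsHom u = 1) :
    ∃ g : G, u = Finsupp.single g 1 := by
  have key : ∀ x y : G, u x * u y = if x = y then u x else 0 := by
    intro x y
    have h := congrArg (evE x y) hd
    rw [evE_deltaHom, evE_tmul] at h
    exact h.symm
  have hsum : ∑ x : G, u x = 1 := by
    rw [← he, epsHom, Finsupp.lsum_apply]
    rw [Finsupp.sum_fintype _ _ (by intro z; rfl)]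
    rfl
  obtain ⟨g, hg⟩ : ∃ g : G, u g ≠ 0 := by
    by_contra hcon
    push_neg at hcon
    rw [Finset.sum_eq_zero (fun x _ => hcon x)] at hsum
    exact one_ne_zero hsum.symm
  have hgg : u g = 1 := by
    have h := key g g
    rw [if_pos rfl] at h
    have := mul_right_cancel₀ hg (by rw [one_mul]; exact h.symm ▸ rfl : u g * u g = 1 * u g)
    exact this
  have hzero : ∀ x : G, x ≠ g → u x = 0 := by
    intro x hx
    have h := key g x
    rw [if_neg (fun hgx => hx hgx.symm), hgg, one_mul] at h
    exact h
  refine ⟨g, Finsupp.ext fun x => ?_⟩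
  by_cases hxg : x = g
  · subst hxg
    simp [hgg]
  · rw [hzero x hxg, Finsupp.single_apply, if_neg (fun h => hxg h.symm)]

lemma key_surj (hα : IsMonoidalAut G α) :
    ∃ g : G, ∀ (X : FDRep ℂ G) (v : X), α.hom.app X v = X.ρ g v := by
  obtain ⟨g, hg⟩ := exists_single (uu α) (delta_uu α hα) (eps_uu α hα)
  refine ⟨g, fun X v => ?_⟩
  have h := nat_apply α (phi X v) (Finsupp.single (1:G) (1:ℂ))
  have h2 : α.hom.app X (phiHom X v (Finsupp.single (1:G) (1:ℂ))) = phiHom X v (uu α) := h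
  rw [phiHom_single, map_one, Module.End.one_apply, one_smul, hg, phiHom_single, one_smul] at h2
  exact h2

end TannakaAux

open TannakaAux in
/-- The map `g ↦ (ρ(g))_{(V,ρ)}` is a group isomorphism from `G` onto the group
`Aut^⊗(F)` of monoidal natural automorphisms of the forgetful functor `F`,
the group structure being composition of natural isomorphisms. -/
theorem finite_group_iso_monoidal_aut_of_forget (G : Type) [Group G] [Fintype G] :
    ∃ e : G ≃ {α : forgetFDRep G ≅ forgetFDRep G // IsMonoidalAut G α},
      (∀ (g : G) (X : FDRep ℂ G), (e g).val.hom.app X = FGModuleCat.ofHom (X.ρ g)) ∧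
      (∀ g h : G, (e (g * h)).val = (e h).val ≪≫ (e g).val) := by
  classical
  let f : G → {α : forgetFDRep G ≅ forgetFDRep G // IsMonoidalAut G α} :=
    fun g => ⟨tIso g, tIso_monoidal g⟩
  have hinj : Function.Injective f := by
    intro g h hgh
    have happ : (tIso (G := G) g).hom.app (regA G) = (tIso (G := G) h).hom.app (regA G) := by
      rw [congrArg (fun z => z.val.hom) hgh]
    have h1 : regRep G g (Finsupp.single (1:G) (1:ℂ))
        = regRep G h (Finsupp.single (1:G) (1:ℂ)) :=
      ConcreteCategory.congr_hom happ _
    rw [regRep_single, regRep_single] at h1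
    have h2 : g • (1:G) = h • (1:G) :=
      Finsupp.single_left_injective (one_ne_zero (α := ℂ)) h1
    simpa using h2
  have hsurj : Function.Surjective f := by
    rintro ⟨α, hα⟩
    obtain ⟨g, hg⟩ := key_surj α hα
    refine ⟨g, Subtype.ext (Iso.ext (NatTrans.ext (funext fun X => ?_)))⟩
    exact FGModuleCat.hom_ext (LinearMap.ext fun v => (hg X v).symm)
  refine ⟨Equiv.ofBijective f ⟨hinj, hsurj⟩, fun g X => rfl, fun g h => ?_⟩
  refine Iso.ext (NatTrans.ext (funext fun X => ?_))
  exact FGModuleCat.hom_ext (LinearMap.ext fun v => by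
    show X.ρ (g * h) v = X.ρ g (X.ρ h v)
    rw [map_mul]; rfl)
end

section
/- Let K be a field, let 𝒜 be an essentially small K-linear abelian category, and let F : 𝒜 → Vect_K be a K-linear functor into finite-dimensional K-vector spaces which is exact and faithful. Then every object of 𝒜 has finite length; that is, every object of 𝒜 is both a noetherian object (its subobjects satisfy the ascending chain condition) and an artinian object (its subobjects satisfy the descending chain condition). -/
open CategoryTheory CategoryTheory.Limits

universe w v u

/-- If `𝒜` is an essentially small `K`-linear abelian category admitting an exact faithful
`K`-linear functor `F : 𝒜 ⥤ FGModuleCat K` to finite-dimensional `K`-vector spaces, then every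
object of `𝒜` has finite length: it is both noetherian (ACC for subobjects) and artinian
(DCC for subobjects). -/
theorem finite_length_of_exact_faithful_fiber_functor
    (K : Type u) [Field K] (𝒜 : Type v) [Category.{w} 𝒜] [Abelian 𝒜] [Linear K 𝒜]
    [EssentiallySmall.{u} 𝒜] (F : 𝒜 ⥤ FGModuleCat K) [F.Additive] [F.Linear K]
    [PreservesFiniteLimits F] [PreservesFiniteColimits F] [F.Faithful] :
    ∀ X : 𝒜, IsNoetherianObject X ∧ IsArtinianObject X := by
  intro X
  -- the dimension of the image under `F` of (the underlying object of) a subobject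
  let d : Subobject X → ℕ := fun P => Module.finrank K (F.obj (P : 𝒜))
  -- injectivity of the underlying linear map of a mono in `FGModuleCat K`
  have inj : ∀ {A B : FGModuleCat.{u_1} K} (m : A ⟶ B) [Mono m],
      Function.Injective m := by
    intro A B m hm
    have : Mono ((forget₂ (FGModuleCat K) (ModuleCat K)).map m) :=
      Functor.map_mono _ m
    exact (ModuleCat.mono_iff_injective
      ((forget₂ (FGModuleCat K) (ModuleCat K)).map m)).1 this
  -- `d` is strictly monotone
  have hd : StrictMono d := by
    intro P Q hPQ
    haveI : Mono (F.map (Subobject.ofLE P Q hPQ.le)) := Functor.map_mono F _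
    have hinj :=
      inj (F.map (Subobject.ofLE P Q hPQ.le))
    have hle : d P ≤ d Q :=
      LinearMap.finrank_le_finrank_of_injective
        (f := ConcreteCategory.hom (F.map (Subobject.ofLE P Q hPQ.le))) hinj
    rcases lt_or_eq_of_le hle with h | h
    · exact h
    · -- equal dimensions: the map is surjective, hence epi, contradiction with `P < Q`
      exfalso
      have hsurj : Function.Surjective (F.map (Subobject.ofLE P Q hPQ.le)) :=
        (LinearMap.injective_iff_surjective_of_finrank_eq_finrank h).1 hinj
      have : Epi ((forget₂ (FGModuleCat K) (ModuleCat K)).map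
          (F.map (Subobject.ofLE P Q hPQ.le))) :=
        (ModuleCat.epi_iff_surjective _).2 hsurj
      haveI : Epi (F.map (Subobject.ofLE P Q hPQ.le)) :=
        (forget₂ (FGModuleCat K) (ModuleCat K)).epi_of_epi_map this
      haveI : Epi (Subobject.ofLE P Q hPQ.le) := F.epi_of_epi_map inferInstance
      haveI : IsIso (Subobject.ofLE P Q hPQ.le) := isIso_of_mono_of_epi _
      have : Q ≤ P := Subobject.le_of_comm (inv (Subobject.ofLE P Q hPQ.le)) (by simp)
      exact absurd (le_antisymm hPQ.le this) hPQ.ne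
  -- `d` is bounded above by the dimension of `F.obj X`
  have hbound : ∀ P : Subobject X, d P < Module.finrank K (F.obj X) + 1 := by
    intro P
    haveI : Mono (F.map P.arrow) := Functor.map_mono F _
    have hinj := inj (F.map P.arrow)
    have : d P ≤ Module.finrank K (F.obj X) :=
      LinearMap.finrank_le_finrank_of_injective
        (f := ConcreteCategory.hom (F.map P.arrow)) hinj
    omega
  -- assemble a strictly monotone map into a finite linear order
  let e : Subobject X → Fin (Module.finrank K (F.obj X) + 1) :=
    fun P => ⟨d P, hbound P⟩
  have he : StrictMono e := fun P Q h => hd h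
  haveI hwlt : WellFoundedLT (Fin (Module.finrank K (F.obj X) + 1)) := inferInstance
  haveI hwgt : WellFoundedGT (Fin (Module.finrank K (F.obj X) + 1)) := inferInstance
  exact ⟨⟨he.wellFoundedGT⟩, ⟨he.wellFoundedLT⟩⟩
end

section
/- Let G be a finite group, F : rep_ℂ(G) → Vect_ℂ the forgetful functor, and let O(G) denote the left regular representation of G on the space of functions G → ℂ, where g acts by (g · f)(x) = f(g⁻¹x). Then for every monoidal natural transformation α : F ⇒ F, the component α_{O(G)} : (G → ℂ) → (G → ℂ) is a homomorphism of ℂ-algebras for the pointwise multiplication; that is, α_{O(G)}(f₁ · f₂) = α_{O(G)}(f₁) · α_{O(G)}(f₂) for all functions f₁, f₂ : G → ℂ, and α_{O(G)} maps the constant function 1 to itself. -/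
open CategoryTheory MonoidalCategory

/-- The left regular representation of a finite group `G` on the space of functions
`G → ℂ`, where `g` acts by `(g · f)(x) = f (g⁻¹ * x)`. -/
noncomputable def leftRegularRep (G : Type) [Group G] [Fintype G] :
    Representation ℂ G (G → ℂ) where
  toFun g :=
    { toFun := fun f x => f (g⁻¹ * x)
      map_add' := fun f₁ f₂ => rfl
      map_smul' := fun c f => rfl }
  map_one' := by ext f x; simp
  map_mul' g h := by ext f x; simp [mul_assoc]

/-- The left regular representation as an object of `FDRep ℂ G`. -/
noncomputable def OG (G : Type) [Group G] [Fintype G] : FDRep ℂ G :=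
  FDRep.of (leftRegularRep G)

/-- The component at the left regular representation `O(G)` of a natural transformation
`α : F ⇒ F` of the forgetful functor, viewed as a `ℂ`-linear endomorphism of `G → ℂ`. -/
noncomputable def appOG (G : Type) [Group G] [Fintype G]
    (α : forgetFDRep G ⟶ forgetFDRep G) : (G → ℂ) →ₗ[ℂ] (G → ℂ) :=
  (α.app (OG G)).hom.hom

/-- Pointwise multiplication as a morphism `O(G) ⊗ O(G) ⟶ O(G)` in `FDRep ℂ G`. -/
noncomputable def mulHom (G : Type) [Group G] [Fintype G] : OG G ⊗ OG G ⟶ OG G where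
  hom := ConcreteCategory.ofHom (LinearMap.mul' ℂ (G → ℂ))
  comm g := by
    ext1
    apply TensorProduct.ext'
    intro f₁ f₂
    rfl

/-- The unit `ℂ → (G → ℂ)` as a morphism `𝟙_ (FDRep ℂ G) ⟶ O(G)`. -/
noncomputable def unitHom (G : Type) [Group G] [Fintype G] : 𝟙_ (FDRep ℂ G) ⟶ OG G where
  hom := ConcreteCategory.ofHom (Algebra.linearMap ℂ (G → ℂ))
  comm g := by
    ext (c : ℂ)
    rfl

/-- For any monoidal natural transformation `α : F ⇒ F` of the forgetful functor on
`FDRep ℂ G`, the component of `α` at the left regular representation `O(G)` is a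
`ℂ`-algebra homomorphism for the pointwise multiplication of functions `G → ℂ`:
it is multiplicative and preserves the constant function `1`. -/
theorem monoidalNatTrans_app_leftRegular_algHom (G : Type) [Group G] [Fintype G]
    (α : forgetFDRep G ⟶ forgetFDRep G)
    (htensor : ∀ V W : FDRep ℂ G, α.app (V ⊗ W) = (α.app V ⊗ₘ α.app W))
    (hunit : α.app (𝟙_ (FDRep ℂ G)) = 𝟙 _) :
    (∀ f₁ f₂ : G → ℂ, appOG G α (f₁ * f₂) = appOG G α f₁ * appOG G α f₂) ∧
      appOG G α (1 : G → ℂ) = (1 : G → ℂ) := by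
  constructor
  · intro f₁ f₂
    have h := α.naturality (mulHom G)
    rw [htensor] at h
    have := congrArg (fun f => f.hom.hom) h
    have := LinearMap.congr_fun this (f₁ ⊗ₜ[ℂ] f₂ : TensorProduct ℂ (G → ℂ) (G → ℂ))
    exact this
  · have h := α.naturality (unitHom G)
    rw [hunit] at h
    have := LinearMap.congr_fun (congrArg (fun f => f.hom.hom) h) (1 : ℂ)
    exact this
end

section
/- Let G be a finite group and equip the space of functions G → ℂ with pointwise multiplication and the left-translation action of G given by (g · f)(x) = f(g⁻¹x). If ψ is a ℂ-algebra automorphism of the algebra of functions G → ℂ which commutes with the left-translation action (i.e., ψ(g · f) = g · ψ(f) for all g ∈ G and f : G → ℂ), then there exists a unique g₀ ∈ G such that ψ(f)(x) = f(x·g₀) for all f : G → ℂ and x ∈ G. -/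
/-- An algebra character on functions on a finite type is evaluation at a point. -/
lemma char_is_eval {G : Type} [Fintype G] [DecidableEq G]
    (φ : (G → ℂ) →ₐ[ℂ] ℂ) : ∃ g₀ : G, ∀ f : G → ℂ, φ f = f g₀ := by
  set e : G → (G → ℂ) := fun g x => if x = g then 1 else 0 with he
  have hsum : (∑ g, e g) = (1 : G → ℂ) := by
    funext x
    simp [he, Finset.sum_apply, Finset.sum_ite_eq']
  have hφsum : (∑ g, φ (e g)) = 1 := by
    rw [← map_sum, hsum, map_one]
  have : ∃ g₀, φ (e g₀) ≠ 0 := by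
    by_contra h
    push_neg at h
    simp [h] at hφsum
  obtain ⟨g₀, hg₀⟩ := this
  refine ⟨g₀, fun f => ?_⟩
  have key : f * e g₀ = f g₀ • e g₀ := by
    funext x
    by_cases hx : x = g₀ <;> simp [he, hx]
  have := congrArg φ key
  rw [map_mul, map_smul, smul_eq_mul] at this
  exact mul_right_cancel₀ hg₀ this

/-- Let `G` be a finite group acting on the `ℂ`-algebra of functions `G → ℂ` (with pointwise
operations) by left translation, `(g · f) x = f (g⁻¹ * x)`. Every `ℂ`-algebra automorphism
`ψ` of `G → ℂ` commuting with the left-translation action is given by a unique right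
translation: there is a unique `g₀ ∈ G` with `ψ f x = f (x * g₀)` for all `f` and `x`. -/
theorem algebra_aut_commuting_with_left_translation_is_right_translation
    (G : Type) [Group G] [Fintype G] (ψ : (G → ℂ) ≃ₐ[ℂ] (G → ℂ))
    (hψ : ∀ (g : G) (f : G → ℂ), ψ (fun x => f (g⁻¹ * x)) = fun x => ψ f (g⁻¹ * x)) :
    ∃! g₀ : G, ∀ (f : G → ℂ) (x : G), ψ f x = f (x * g₀) := by
  classical
  obtain ⟨g₀, hg₀⟩ := char_is_eval ((Pi.evalAlgHom ℂ (fun _ : G => ℂ) 1).comp ψ.toAlgHom)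
  have hval : ∀ f : G → ℂ, ψ f 1 = f g₀ := fun f => hg₀ f
  refine ⟨g₀, ?_, ?_⟩
  · intro f x
    have h := congrFun (hψ x⁻¹ f) 1
    simp only [inv_inv, mul_one] at h
    rw [← h, hval]
  · intro g₁ hg₁
    have h0 := hval (fun x => if x = g₀ then 1 else 0)
    have h1 := hg₁ (fun x => if x = g₀ then 1 else 0) 1
    rw [h0] at h1
    simp only [one_mul] at h1
    by_contra hne
    simp [hne] at h1
end

section
/- Let K be a field, 𝒜 a small category, and F : 𝒜 → Vect_K a functor into finite-dimensional K-vector spaces. Let M denote the direct sum over all objects X of 𝒜 of the spaces F(X)^* ⊗ F(X), and let E ⊆ M be the K-subspace spanned by all elements y_* ⊗ (Ff)(x) − (Ff)^*(y_*) ⊗ x for morphisms f : X → Y in 𝒜, x ∈ F(X), and y_* ∈ F(Y)^*. Then the quotient M/E carries a K-coalgebra structure whose comultiplication and counit are given on the class of a pure tensor ξ ⊗ x ∈ F(X)^* ⊗ F(X) by Δ([ξ ⊗ x]) = Σᵢ [ξ ⊗ eᵢ] ⊗ [eᵢ^* ⊗ x] for any basis (eᵢ) of F(X) with dual basis (eᵢ^*),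 and ε([ξ ⊗ x]) = ξ(x); in particular these formulas are well defined on the quotient, coassociative and counital. -/
open CategoryTheory TensorProduct

universe u

variable (K : Type u) [Field K] (𝒜 : Type u) [SmallCategory 𝒜] [DecidableEq 𝒜]
  (F : 𝒜 ⥤ FGModuleCat K)

/-- The direct sum `M = ⨁_{X ∈ 𝒜} F(X)^* ⊗ F(X)`. -/
noncomputable def coendCarrier : Type u :=
  DirectSum 𝒜 (fun X => Module.Dual K (F.obj X) ⊗[K] F.obj X)

noncomputable instance : AddCommGroup (coendCarrier K 𝒜 F) :=
  DirectSum.instAddCommGroup (β := fun X => Module.Dual K (F.obj X) ⊗[K] F.obj X)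

noncomputable instance : Module K (coendCarrier K 𝒜 F) :=
  inferInstanceAs (Module K (DirectSum 𝒜 (fun X => Module.Dual K (F.obj X) ⊗[K] F.obj X)))

/-- The element of `M` given by `ξ ⊗ x ∈ F(X)^* ⊗ F(X)` in the summand indexed by `X`. -/
noncomputable def coendElt (X : 𝒜) (ξ : Module.Dual K (F.obj X)) (x : F.obj X) :
    coendCarrier K 𝒜 F :=
  DirectSum.lof K 𝒜 (fun X => Module.Dual K (F.obj X) ⊗[K] F.obj X) X (ξ ⊗ₜ[K] x)

/-- The subspace `E ⊆ M` spanned by the elements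
`y_* ⊗ (Ff)(x) − (Ff)^*(y_*) ⊗ x` for `f : X ⟶ Y`, `x ∈ F(X)`, `y_* ∈ F(Y)^*`. -/
noncomputable def coendRelations : Submodule K (coendCarrier K 𝒜 F) :=
  Submodule.span K
    {m | ∃ (X Y : 𝒜) (f : X ⟶ Y) (x : F.obj X) (y : Module.Dual K (F.obj Y)),
      m = coendElt K 𝒜 F Y y (F.map f x) - coendElt K 𝒜 F X (y.comp (F.map f).hom.hom) x}

/-- The quotient `M/E`, i.e. the coend of `F`. -/
noncomputable def coendQ : Type u :=
  coendCarrier K 𝒜 F ⧸ coendRelations K 𝒜 F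

noncomputable instance : AddCommGroup (coendQ K 𝒜 F) :=
  inferInstanceAs (AddCommGroup (coendCarrier K 𝒜 F ⧸ coendRelations K 𝒜 F))

noncomputable instance : Module K (coendQ K 𝒜 F) :=
  inferInstanceAs (Module K (coendCarrier K 𝒜 F ⧸ coendRelations K 𝒜 F))

/-- The quotient map `M → M/E`. -/
noncomputable def coendMk : coendCarrier K 𝒜 F →ₗ[K] coendQ K 𝒜 F :=
  (coendRelations K 𝒜 F).mkQ


/-- A basis-change lemma: for a linear map `f : V → W` and finite bases `b` of `V`, `c` of `W`,
the element `∑ i, f (b i) ⊗ b.coord i` of `W ⊗ V^*` equals `∑ j, c j ⊗ (c.coord j ∘ f)`. -/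
theorem coend_key_sum {V W : Type u} [AddCommGroup V] [Module K V] [AddCommGroup W] [Module K W]
    {ι κ : Type*} [Fintype ι] [Fintype κ] (b : Module.Basis ι K V) (c : Module.Basis κ K W)
    (f : V →ₗ[K] W) :
    ∑ i, f (b i) ⊗ₜ[K] b.coord i = ∑ j, c j ⊗ₜ[K] ((c.coord j).comp f) := by
  calc ∑ i, f (b i) ⊗ₜ[K] b.coord i
      = ∑ i, ∑ j, c j ⊗ₜ[K] (c.repr (f (b i)) j • b.coord i) := by
        refine Finset.sum_congr rfl fun i _ => ?_
        conv_lhs => rw [← c.sum_repr (f (b i))]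
        rw [sum_tmul]
        exact Finset.sum_congr rfl fun j _ => by rw [smul_tmul]
    _ = ∑ j, c j ⊗ₜ[K] (∑ i, c.repr (f (b i)) j • b.coord i) := by
        rw [Finset.sum_comm]
        exact Finset.sum_congr rfl fun j _ => (tmul_sum _ _ _).symm
    _ = ∑ j, c j ⊗ₜ[K] ((c.coord j).comp f) := by
        refine Finset.sum_congr rfl fun j _ => ?_
        congr 1
        have h := b.sum_dual_apply_smul_coord ((c.coord j).comp f)
        simpa [Module.Basis.coord_apply] using h

/-- The map `F(X)^* ⊗ F(X) → M/E`. -/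
noncomputable def coendP (X : 𝒜) :
    (Module.Dual K (F.obj X) ⊗[K] F.obj X) →ₗ[K] coendQ K 𝒜 F :=
  (coendMk K 𝒜 F).comp (DirectSum.lof K 𝒜 (fun X => Module.Dual K (F.obj X) ⊗[K] F.obj X) X)

theorem coendP_apply (X : 𝒜) (ξ : Module.Dual K (F.obj X)) (x : F.obj X) :
    coendP K 𝒜 F X (ξ ⊗ₜ[K] x) = coendMk K 𝒜 F (coendElt K 𝒜 F X ξ x) := rfl

theorem coendMk_rel {X Y : 𝒜} (f : X ⟶ Y) (x : F.obj X) (y : Module.Dual K (F.obj Y)) :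
    coendMk K 𝒜 F (coendElt K 𝒜 F Y y (F.map f x)) =
      coendMk K 𝒜 F (coendElt K 𝒜 F X (y.comp (F.map f).hom.hom) x) := by
  rw [← sub_eq_zero, ← map_sub, coendMk]
  exact (Submodule.Quotient.mk_eq_zero _).mpr (Submodule.subset_span ⟨X, Y, f, x, y, rfl⟩)

/-- Comultiplication on the summand indexed by `X`, using the canonical finite basis. -/
noncomputable def coendDeltaAux (X : 𝒜) :
    (Module.Dual K (F.obj X) ⊗[K] F.obj X) →ₗ[K] coendQ K 𝒜 F ⊗[K] coendQ K 𝒜 F :=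
  TensorProduct.lift <| LinearMap.mk₂ K
    (fun ξ x => ∑ i, coendP K 𝒜 F X (ξ ⊗ₜ[K] Module.finBasis K (F.obj X) i) ⊗ₜ[K]
        coendP K 𝒜 F X ((Module.finBasis K (F.obj X)).coord i ⊗ₜ[K] x))
    (fun ξ ξ' x => by
      simp [add_tmul, tmul_add, map_add, Finset.sum_add_distrib])
    (fun r ξ x => by
      simp only [← smul_tmul', map_smul, Finset.smul_sum])
    (fun ξ x x' => by
      simp [tmul_add, map_add, Finset.sum_add_distrib])
    (fun r ξ x => by
      simp [tmul_smul, Finset.smul_sum, map_smul])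

/-- The comultiplication on `M`. -/
noncomputable def coendDeltaM :
    coendCarrier K 𝒜 F →ₗ[K] coendQ K 𝒜 F ⊗[K] coendQ K 𝒜 F :=
  DirectSum.toModule K 𝒜 _ (fun X => coendDeltaAux K 𝒜 F X)

theorem coendDeltaM_elt (X : 𝒜) (ξ : Module.Dual K (F.obj X)) (x : F.obj X) :
    coendDeltaM K 𝒜 F (coendElt K 𝒜 F X ξ x) =
      ∑ i, coendP K 𝒜 F X (ξ ⊗ₜ[K] Module.finBasis K (F.obj X) i) ⊗ₜ[K]
        coendP K 𝒜 F X ((Module.finBasis K (F.obj X)).coord i ⊗ₜ[K] x) := by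
  rw [coendDeltaM, coendElt]
  erw [DirectSum.toModule_lof]
  rw [coendDeltaAux, TensorProduct.lift.tmul, LinearMap.mk₂_apply]

/-- `Δ_M` on a pure tensor, via an arbitrary finite basis. -/
theorem coendDeltaM_formula (X : 𝒜) (ξ : Module.Dual K (F.obj X)) (x : F.obj X)
    (ι : Type*) [Fintype ι] (b : Module.Basis ι K (F.obj X)) :
    coendDeltaM K 𝒜 F (coendElt K 𝒜 F X ξ x) =
      ∑ i, coendMk K 𝒜 F (coendElt K 𝒜 F X ξ (b i)) ⊗ₜ[K]
        coendMk K 𝒜 F (coendElt K 𝒜 F X (b.coord i) x) := by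
  classical
  set c := Module.finBasis K (F.obj X)
  have hb : ∑ i, b i ⊗ₜ[K] b.coord i = ∑ j, c j ⊗ₜ[K] c.coord j := by
    have h := coend_key_sum K b c LinearMap.id
    simpa using h
  set G : (F.obj X ⊗[K] Module.Dual K (F.obj X)) →ₗ[K] coendQ K 𝒜 F ⊗[K] coendQ K 𝒜 F :=
    TensorProduct.map
      ((coendP K 𝒜 F X).comp (TensorProduct.mk K (Module.Dual K (F.obj X)) (F.obj X) ξ))
      ((coendP K 𝒜 F X).comp ((TensorProduct.mk K (Module.Dual K (F.obj X)) (F.obj X)).flip x))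
    with hG
  have h2 := congrArg G hb
  rw [map_sum, map_sum] at h2
  simp only [hG, TensorProduct.map_tmul, LinearMap.comp_apply, TensorProduct.mk_apply,
    LinearMap.flip_apply] at h2
  rw [coendDeltaM_elt]
  simp only [coendP_apply] at h2 ⊢
  exact h2.symm

/-- The counit on `M`. -/
noncomputable def coendEpsM : coendCarrier K 𝒜 F →ₗ[K] K :=
  DirectSum.toModule K 𝒜 K (fun X => contractLeft K (F.obj X))

theorem coendEpsM_elt (X : 𝒜) (ξ : Module.Dual K (F.obj X)) (x : F.obj X) :
    coendEpsM K 𝒜 F (coendElt K 𝒜 F X ξ x) = ξ x := by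
  rw [coendEpsM, coendElt]
  erw [DirectSum.toModule_lof]
  exact contractLeft_apply ξ x

theorem coendEpsM_ker : coendRelations K 𝒜 F ≤ LinearMap.ker (coendEpsM K 𝒜 F) := by
  rw [coendRelations, Submodule.span_le]
  rintro m ⟨X, Y, f, x, y, rfl⟩
  simp only [SetLike.mem_coe, LinearMap.mem_ker, map_sub, coendEpsM_elt, sub_eq_zero]
  rfl

theorem coendDeltaM_ker : coendRelations K 𝒜 F ≤ LinearMap.ker (coendDeltaM K 𝒜 F) := by
  classical
  rw [coendRelations, Submodule.span_le]
  rintro m ⟨X, Y, f, x, y, rfl⟩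
  simp only [SetLike.mem_coe, LinearMap.mem_ker, map_sub, sub_eq_zero]
  set b := Module.finBasis K (F.obj X)
  set c := Module.finBasis K (F.obj Y)
  rw [coendDeltaM_formula K 𝒜 F Y y (F.map f x) _ c,
    coendDeltaM_formula K 𝒜 F X (y.comp (F.map f).hom.hom) x _ b]
  -- rewrite both sides into the image of `coend_key_sum` under a bilinear map
  have hrel1 : ∀ j, coendMk K 𝒜 F (coendElt K 𝒜 F Y (c.coord j) (F.map f x)) =
      coendMk K 𝒜 F (coendElt K 𝒜 F X ((c.coord j).comp (F.map f).hom.hom) x) := fun j =>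
    coendMk_rel K 𝒜 F f x (c.coord j)
  have hrel2 : ∀ i, coendMk K 𝒜 F (coendElt K 𝒜 F X (y.comp (F.map f).hom.hom) (b i)) =
      coendMk K 𝒜 F (coendElt K 𝒜 F Y y (F.map f (b i))) := fun i =>
    (coendMk_rel K 𝒜 F f (b i) y).symm
  set G : (F.obj Y ⊗[K] Module.Dual K (F.obj X)) →ₗ[K] coendQ K 𝒜 F ⊗[K] coendQ K 𝒜 F :=
    TensorProduct.map
      ((coendP K 𝒜 F Y).comp (TensorProduct.mk K (Module.Dual K (F.obj Y)) (F.obj Y) y))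
      ((coendP K 𝒜 F X).comp ((TensorProduct.mk K (Module.Dual K (F.obj X)) (F.obj X)).flip x))
    with hG
  have hk := congrArg G (coend_key_sum K b c (F.map f).hom.hom)
  rw [map_sum, map_sum] at hk
  simp only [hG, TensorProduct.map_tmul, LinearMap.comp_apply, TensorProduct.mk_apply,
    LinearMap.flip_apply, coendP_apply] at hk
  calc ∑ j, coendMk K 𝒜 F (coendElt K 𝒜 F Y y (c j)) ⊗ₜ[K]
        coendMk K 𝒜 F (coendElt K 𝒜 F Y (c.coord j) (F.map f x))
      = ∑ j, coendMk K 𝒜 F (coendElt K 𝒜 F Y y (c j)) ⊗ₜ[K]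
        coendMk K 𝒜 F (coendElt K 𝒜 F X ((c.coord j).comp (F.map f).hom.hom) x) := by
        exact Finset.sum_congr rfl fun j _ => by rw [hrel1 j]
    _ = ∑ i, coendMk K 𝒜 F (coendElt K 𝒜 F Y y (F.map f (b i))) ⊗ₜ[K]
        coendMk K 𝒜 F (coendElt K 𝒜 F X (b.coord i) x) := hk.symm
    _ = ∑ i, coendMk K 𝒜 F (coendElt K 𝒜 F X (y.comp (F.map f).hom.hom) (b i)) ⊗ₜ[K]
        coendMk K 𝒜 F (coendElt K 𝒜 F X (b.coord i) x) := by
        exact Finset.sum_congr rfl fun i _ => by rw [hrel2 i]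

/-- The comultiplication on the quotient. -/
noncomputable def coendDelta : coendQ K 𝒜 F →ₗ[K] coendQ K 𝒜 F ⊗[K] coendQ K 𝒜 F :=
  Submodule.liftQ _ (coendDeltaM K 𝒜 F) (coendDeltaM_ker K 𝒜 F)

/-- The counit on the quotient. -/
noncomputable def coendEps : coendQ K 𝒜 F →ₗ[K] K :=
  Submodule.liftQ _ (coendEpsM K 𝒜 F) (coendEpsM_ker K 𝒜 F)

theorem coendDelta_formula (X : 𝒜) (ξ : Module.Dual K (F.obj X)) (x : F.obj X)
    (ι : Type*) [Fintype ι] (b : Module.Basis ι K (F.obj X)) :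
    coendDelta K 𝒜 F (coendMk K 𝒜 F (coendElt K 𝒜 F X ξ x)) =
      ∑ i, coendMk K 𝒜 F (coendElt K 𝒜 F X ξ (b i)) ⊗ₜ[K]
        coendMk K 𝒜 F (coendElt K 𝒜 F X (b.coord i) x) := by
  rw [← coendDeltaM_formula K 𝒜 F X ξ x ι b]
  exact Submodule.liftQ_apply _ _ _

theorem coendEps_formula (X : 𝒜) (ξ : Module.Dual K (F.obj X)) (x : F.obj X) :
    coendEps K 𝒜 F (coendMk K 𝒜 F (coendElt K 𝒜 F X ξ x)) = ξ x := by
  rw [← coendEpsM_elt K 𝒜 F X ξ x]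
  exact Submodule.liftQ_apply _ _ _

theorem coendQ_ext {N : Type*} [AddCommGroup N] [Module K N] {f g : coendQ K 𝒜 F →ₗ[K] N}
    (h : ∀ (X : 𝒜) (ξ : Module.Dual K (F.obj X)) (x : F.obj X),
      f (coendMk K 𝒜 F (coendElt K 𝒜 F X ξ x)) = g (coendMk K 𝒜 F (coendElt K 𝒜 F X ξ x))) :
    f = g := by
  refine Submodule.linearMap_qext _ ?_
  refine DirectSum.linearMap_ext K fun X => ?_
  refine TensorProduct.ext' fun ξ x => ?_
  exact h X ξ x

theorem coend_coassoc :
    (TensorProduct.assoc K _ _ _).toLinearMap.comp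
        ((TensorProduct.map (coendDelta K 𝒜 F) LinearMap.id).comp (coendDelta K 𝒜 F)) =
      (TensorProduct.map LinearMap.id (coendDelta K 𝒜 F)).comp (coendDelta K 𝒜 F) := by
  classical
  refine coendQ_ext K 𝒜 F fun X ξ x => ?_
  set c := Module.finBasis K (F.obj X)
  have hΔ : ∀ (ξ : Module.Dual K (F.obj X)) (x : F.obj X),
      coendDelta K 𝒜 F (coendMk K 𝒜 F (coendElt K 𝒜 F X ξ x)) =
        ∑ i, coendMk K 𝒜 F (coendElt K 𝒜 F X ξ (c i)) ⊗ₜ[K]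
          coendMk K 𝒜 F (coendElt K 𝒜 F X (c.coord i) x) :=
    fun ξ x => coendDelta_formula K 𝒜 F X ξ x _ c
  simp only [LinearMap.comp_apply, hΔ, map_sum, TensorProduct.map_tmul, LinearMap.id_apply,
    sum_tmul, tmul_sum, LinearEquiv.coe_coe, TensorProduct.assoc_tmul]
  rw [Finset.sum_comm]

theorem coend_counit_left :
    (TensorProduct.lid K _).toLinearMap.comp
        ((TensorProduct.map (coendEps K 𝒜 F) LinearMap.id).comp (coendDelta K 𝒜 F)) =
      LinearMap.id := by
  classical
  refine coendQ_ext K 𝒜 F fun X ξ x => ?_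
  set c := Module.finBasis K (F.obj X)
  set L : Module.Dual K (F.obj X) →ₗ[K] coendQ K 𝒜 F :=
    (coendP K 𝒜 F X).comp
      ((TensorProduct.mk K (Module.Dual K (F.obj X)) (F.obj X)).flip x) with hL
  have hLa : ∀ η, L η = coendMk K 𝒜 F (coendElt K 𝒜 F X η x) := fun η => rfl
  simp only [LinearMap.comp_apply, coendDelta_formula K 𝒜 F X ξ x _ c, map_sum,
    TensorProduct.map_tmul, LinearMap.id_apply, LinearEquiv.coe_coe, TensorProduct.lid_tmul,
    coendEps_formula]
  calc ∑ i, ξ (c i) • coendMk K 𝒜 F (coendElt K 𝒜 F X (c.coord i) x)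
      = ∑ i, ξ (c i) • L (c.coord i) := by simp only [hLa]
    _ = L (∑ i, ξ (c i) • c.coord i) := by rw [map_sum]; simp only [map_smul]
    _ = L ξ := by rw [c.sum_dual_apply_smul_coord]
    _ = coendMk K 𝒜 F (coendElt K 𝒜 F X ξ x) := hLa ξ

theorem coend_counit_right :
    (TensorProduct.rid K _).toLinearMap.comp
        ((TensorProduct.map LinearMap.id (coendEps K 𝒜 F)).comp (coendDelta K 𝒜 F)) =
      LinearMap.id := by
  classical
  refine coendQ_ext K 𝒜 F fun X ξ x => ?_
  set c := Module.finBasis K (F.obj X)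
  set R : F.obj X →ₗ[K] coendQ K 𝒜 F :=
    (coendP K 𝒜 F X).comp
      (TensorProduct.mk K (Module.Dual K (F.obj X)) (F.obj X) ξ) with hR
  have hRa : ∀ v, R v = coendMk K 𝒜 F (coendElt K 𝒜 F X ξ v) := fun v => rfl
  simp only [LinearMap.comp_apply, coendDelta_formula K 𝒜 F X ξ x _ c, map_sum,
    TensorProduct.map_tmul, LinearMap.id_apply, LinearEquiv.coe_coe, TensorProduct.rid_tmul,
    coendEps_formula]
  calc ∑ i, (c.coord i) x • coendMk K 𝒜 F (coendElt K 𝒜 F X ξ (c i))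
      = ∑ i, c.repr x i • R (c i) := by simp only [hRa, Module.Basis.coord_apply]
    _ = R (∑ i, c.repr x i • c i) := by rw [map_sum]; simp only [map_smul]
    _ = R x := by rw [c.sum_repr]
    _ = coendMk K 𝒜 F (coendElt K 𝒜 F X ξ x) := hRa x

/-- The quotient `M/E` carries a `K`-coalgebra structure (it is the coend of `F`):
there are a coassociative comultiplication `Δ` and a counit `ε` satisfying the counit
axioms, given on the class of a pure tensor `ξ ⊗ x ∈ F(X)^* ⊗ F(X)` by
`Δ [ξ ⊗ x] = ∑ i [ξ ⊗ eᵢ] ⊗ [eᵢ^* ⊗ x]` (for any finite basis `(eᵢ)` of `F(X)`)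
and `ε [ξ ⊗ x] = ξ(x)`. -/
theorem coend_coalgebra :
    ∃ (Δ : coendQ K 𝒜 F →ₗ[K] coendQ K 𝒜 F ⊗[K] coendQ K 𝒜 F)
      (ε : coendQ K 𝒜 F →ₗ[K] K),
      -- coassociativity
      (TensorProduct.assoc K _ _ _).toLinearMap.comp
          ((TensorProduct.map Δ LinearMap.id).comp Δ) =
        (TensorProduct.map LinearMap.id Δ).comp Δ ∧
      -- left counit axiom
      (TensorProduct.lid K _).toLinearMap.comp ((TensorProduct.map ε LinearMap.id).comp Δ) =
        LinearMap.id ∧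
      -- right counit axiom
      (TensorProduct.rid K _).toLinearMap.comp ((TensorProduct.map LinearMap.id ε).comp Δ) =
        LinearMap.id ∧
      -- the comultiplication on classes of pure tensors, via any finite basis of `F(X)`
      (∀ (X : 𝒜) (ξ : Module.Dual K (F.obj X)) (x : F.obj X)
          (ι : Type u) (_ : Fintype ι) (b : Module.Basis ι K (F.obj X)),
        Δ (coendMk K 𝒜 F (coendElt K 𝒜 F X ξ x)) =
          ∑ i, coendMk K 𝒜 F (coendElt K 𝒜 F X ξ (b i)) ⊗ₜ[K]
            coendMk K 𝒜 F (coendElt K 𝒜 F X (b.coord i) x)) ∧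
      -- the counit on classes of pure tensors
      (∀ (X : 𝒜) (ξ : Module.Dual K (F.obj X)) (x : F.obj X),
        ε (coendMk K 𝒜 F (coendElt K 𝒜 F X ξ x)) = ξ x) := by
  refine ⟨coendDelta K 𝒜 F, coendEps K 𝒜 F, coend_coassoc K 𝒜 F, coend_counit_left K 𝒜 F,
    coend_counit_right K 𝒜 F, ?_, coendEps_formula K 𝒜 F⟩
  intro X ξ x ι hι b
  exact coendDelta_formula K 𝒜 F X ξ x ι b
end

section
/- Let K be a field and let A be the quotient of the free associative K-algebra on five generators a, b, c, d, e by the two-sided ideal generated by the elements: ac − ca, bd − db, (ad − cb) − (da − bc), (ad − cb)·e − 1, e·(ad − cb) − 1, a·e·d − b·e·c − 1, d·e·a − c·e·b − 1, b·e·a − a·e·b, and c·e·d − d·e·c. Then A admits the structure of a Hopf algebra over K whose comultiplication Δ and counit ε satisfy Δ(a) = a⊗a + b⊗c, Δ(b) = a⊗b + b⊗d, Δ(c) = c⊗a + d⊗c, Δ(d) = c⊗b + d⊗d, Δ(e) = e⊗e, ε(a) = ε(d) = ε(e) = 1, and ε(b) = ε(c) = 0. (This Hopf algebra is the universal Hopf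 algebra aut(K[x,y]) coacting on the polynomial ring K[x,y]; here e plays the role of δ⁻¹ where δ = ad − cb is the quantum determinant.) -/
open TensorProduct

universe u

variable (K : Type u) [Field K]

namespace UAutPoly

/-- Generators `a, b, c, d, e` of the free associative algebra on five generators. -/
noncomputable def a : FreeAlgebra K (Fin 5) := FreeAlgebra.ι K 0
noncomputable def b : FreeAlgebra K (Fin 5) := FreeAlgebra.ι K 1
noncomputable def c : FreeAlgebra K (Fin 5) := FreeAlgebra.ι K 2
noncomputable def d : FreeAlgebra K (Fin 5) := FreeAlgebra.ι K 3
noncomputable def e : FreeAlgebra K (Fin 5) := FreeAlgebra.ι K 4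

/-- The defining relations of `aut(K[x,y])`: `RingQuot (rel K)` is the quotient of the free
algebra on `a, b, c, d, e` by the two-sided ideal generated by
`ac − ca`, `bd − db`, `(ad − cb) − (da − bc)`, `(ad − cb)e − 1`, `e(ad − cb) − 1`,
`aed − bec − 1`, `dea − ceb − 1`, `bea − aeb`, `ced − dec`. -/
inductive rel : FreeAlgebra K (Fin 5) → FreeAlgebra K (Fin 5) → Prop
  | ac_comm : rel (a K * c K) (c K * a K)
  | bd_comm : rel (b K * d K) (d K * b K)
  | det_eq : rel (a K * d K - c K * b K) (d K * a K - b K * c K)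
  | det_e : rel ((a K * d K - c K * b K) * e K) 1
  | e_det : rel (e K * (a K * d K - c K * b K)) 1
  | aed_bec : rel (a K * e K * d K - b K * e K * c K) 1
  | dea_ceb : rel (d K * e K * a K - c K * e K * b K) 1
  | bea_aeb : rel (b K * e K * a K) (a K * e K * b K)
  | ced_dec : rel (c K * e K * d K) (d K * e K * c K)

/-- The universal Hopf algebra `aut(K[x,y])` as an algebra: the free algebra on
`a, b, c, d, e` modulo the two-sided ideal generated by the relations above. -/
noncomputable abbrev A : Type u := RingQuot (rel K)

/-- The canonical algebra map from the free algebra onto `A`. -/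
noncomputable def mk : FreeAlgebra K (Fin 5) →ₐ[K] A K :=
  RingQuot.mkAlgHom K (rel K)
noncomputable section AuxHopf

open MulOpposite

private def a1 : A K := mk K (a K)
private def b1 : A K := mk K (b K)
private def c1 : A K := mk K (c K)
private def d1 : A K := mk K (d K)
private def e1 : A K := mk K (e K)

private lemma hac : a1 K * c1 K = c1 K * a1 K := by
  simpa [a1, c1, mk, map_mul] using RingQuot.mkAlgHom_rel K (rel.ac_comm (K := K))

private lemma hbd : b1 K * d1 K = d1 K * b1 K := by
  simpa [b1, d1, mk, map_mul] using RingQuot.mkAlgHom_rel K (rel.bd_comm (K := K))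

private lemma hdet : a1 K * d1 K - c1 K * b1 K = d1 K * a1 K - b1 K * c1 K := by
  simpa [a1, b1, c1, d1, mk, map_mul, map_sub] using
    RingQuot.mkAlgHom_rel K (rel.det_eq (K := K))

private lemma hde : (a1 K * d1 K - c1 K * b1 K) * e1 K = 1 := by
  simpa [a1, b1, c1, d1, e1, mk, map_mul, map_sub, map_one] using
    RingQuot.mkAlgHom_rel K (rel.det_e (K := K))

private lemma hed : e1 K * (a1 K * d1 K - c1 K * b1 K) = 1 := by
  simpa [a1, b1, c1, d1, e1, mk, map_mul, map_sub, map_one] using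
    RingQuot.mkAlgHom_rel K (rel.e_det (K := K))

private lemma haed : a1 K * e1 K * d1 K - b1 K * e1 K * c1 K = 1 := by
  simpa [a1, b1, c1, d1, e1, mk, map_mul, map_sub, map_one] using
    RingQuot.mkAlgHom_rel K (rel.aed_bec (K := K))

private lemma hdea : d1 K * e1 K * a1 K - c1 K * e1 K * b1 K = 1 := by
  simpa [a1, b1, c1, d1, e1, mk, map_mul, map_sub, map_one] using
    RingQuot.mkAlgHom_rel K (rel.dea_ceb (K := K))

private lemma hbea : b1 K * e1 K * a1 K = a1 K * e1 K * b1 K := by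
  simpa [a1, b1, e1, mk, map_mul] using RingQuot.mkAlgHom_rel K (rel.bea_aeb (K := K))

private lemma hced : c1 K * e1 K * d1 K = d1 K * e1 K * c1 K := by
  simpa [c1, d1, e1, mk, map_mul] using RingQuot.mkAlgHom_rel K (rel.ced_dec (K := K))

private lemma hda : d1 K * a1 K = a1 K * d1 K - c1 K * b1 K + b1 K * c1 K := by
  rw [hdet]; abel

private lemma haed' : a1 K * e1 K * d1 K = 1 + b1 K * e1 K * c1 K := by
  rw [← haed]; abel

private lemma hdea' : d1 K * e1 K * a1 K = 1 + c1 K * e1 K * b1 K := by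
  rw [← hdea]; abel


private lemma nmul (x y : A K) : -x * y = -(x * y) := by
  rw [show -x = 0 - x from (zero_sub x).symm, sub_mul, zero_mul, zero_sub]

private lemma muln (x y : A K) : x * -y = -(x * y) := by
  rw [show -y = 0 - y from (zero_sub y).symm, mul_sub, mul_zero, zero_sub]

private def ΔF : FreeAlgebra K (Fin 5) →ₐ[K] A K ⊗[K] A K :=
  FreeAlgebra.lift K
    ![a1 K ⊗ₜ[K] a1 K + b1 K ⊗ₜ[K] c1 K,
      a1 K ⊗ₜ[K] b1 K + b1 K ⊗ₜ[K] d1 K,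
      c1 K ⊗ₜ[K] a1 K + d1 K ⊗ₜ[K] c1 K,
      c1 K ⊗ₜ[K] b1 K + d1 K ⊗ₜ[K] d1 K,
      e1 K ⊗ₜ[K] e1 K]

private lemma ΔF_a : ΔF K (a K) = a1 K ⊗ₜ[K] a1 K + b1 K ⊗ₜ[K] c1 K := by
  simp [ΔF, a]
private lemma ΔF_b : ΔF K (b K) = a1 K ⊗ₜ[K] b1 K + b1 K ⊗ₜ[K] d1 K := by
  simp [ΔF, b]
private lemma ΔF_c : ΔF K (c K) = c1 K ⊗ₜ[K] a1 K + d1 K ⊗ₜ[K] c1 K := by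
  simp [ΔF, c]
private lemma ΔF_d : ΔF K (d K) = c1 K ⊗ₜ[K] b1 K + d1 K ⊗ₜ[K] d1 K := by
  simp [ΔF, d]
private lemma ΔF_e : ΔF K (e K) = e1 K ⊗ₜ[K] e1 K := by
  simp [ΔF, e]

private lemma ΔF_det :
    ΔF K (a K * d K - c K * b K) =
      (a1 K * d1 K - c1 K * b1 K) ⊗ₜ[K] (a1 K * d1 K - c1 K * b1 K) := by
  simp only [map_sub, map_mul, ΔF_a, ΔF_b, ΔF_c, ΔF_d]
  simp only [mul_add, add_mul, Algebra.TensorProduct.tmul_mul_tmul]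
  rw [hac, hbd, hda]
  simp only [TensorProduct.sub_tmul, TensorProduct.add_tmul, TensorProduct.tmul_sub,
    TensorProduct.tmul_add]
  abel

private lemma Δrel : ∀ ⦃x y⦄, rel K x y → ΔF K x = ΔF K y := by
  intro x y h
  cases h with
  | ac_comm =>
      simp only [map_mul, ΔF_a, ΔF_c]
      simp only [mul_add, add_mul, Algebra.TensorProduct.tmul_mul_tmul]
      rw [hac, hbd, hda]
      simp only [TensorProduct.sub_tmul, TensorProduct.add_tmul]
      abel
  | bd_comm =>
      simp only [map_mul, ΔF_b, ΔF_d]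
      simp only [mul_add, add_mul, Algebra.TensorProduct.tmul_mul_tmul]
      rw [hac, hbd, hda]
      simp only [TensorProduct.sub_tmul, TensorProduct.add_tmul]
      abel
  | det_eq =>
      rw [ΔF_det]
      simp only [map_sub, map_mul, ΔF_a, ΔF_b, ΔF_c, ΔF_d]
      simp only [mul_add, add_mul, Algebra.TensorProduct.tmul_mul_tmul]
      rw [hac, hbd, hda]
      simp only [TensorProduct.sub_tmul, TensorProduct.add_tmul, TensorProduct.tmul_sub,
        TensorProduct.tmul_add]
      abel
  | det_e =>
      rw [map_mul, ΔF_det, ΔF_e, map_one, Algebra.TensorProduct.tmul_mul_tmul, hde,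
        Algebra.TensorProduct.one_def]
  | e_det =>
      rw [map_mul, ΔF_det, ΔF_e, map_one, Algebra.TensorProduct.tmul_mul_tmul, hed,
        Algebra.TensorProduct.one_def]
  | aed_bec =>
      simp only [map_sub, map_mul, map_one, ΔF_a, ΔF_b, ΔF_c, ΔF_d, ΔF_e]
      simp only [mul_add, add_mul, Algebra.TensorProduct.tmul_mul_tmul]
      rw [hbea, hced, haed', hdea']
      simp only [TensorProduct.sub_tmul, TensorProduct.add_tmul, TensorProduct.tmul_sub,
        TensorProduct.tmul_add, Algebra.TensorProduct.one_def]
      abel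
  | dea_ceb =>
      simp only [map_sub, map_mul, map_one, ΔF_a, ΔF_b, ΔF_c, ΔF_d, ΔF_e]
      simp only [mul_add, add_mul, Algebra.TensorProduct.tmul_mul_tmul]
      rw [hbea, hced, haed', hdea']
      simp only [TensorProduct.sub_tmul, TensorProduct.add_tmul, TensorProduct.tmul_sub,
        TensorProduct.tmul_add, Algebra.TensorProduct.one_def]
      abel
  | bea_aeb =>
      simp only [map_mul, ΔF_a, ΔF_b, ΔF_e]
      simp only [mul_add, add_mul, Algebra.TensorProduct.tmul_mul_tmul]
      rw [hbea, hced, haed', hdea']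
      simp only [TensorProduct.sub_tmul, TensorProduct.add_tmul, TensorProduct.tmul_sub,
        TensorProduct.tmul_add]
      abel
  | ced_dec =>
      simp only [map_mul, ΔF_c, ΔF_d, ΔF_e]
      simp only [mul_add, add_mul, Algebra.TensorProduct.tmul_mul_tmul]
      rw [hbea, hced, haed', hdea']
      simp only [TensorProduct.sub_tmul, TensorProduct.add_tmul, TensorProduct.tmul_sub,
        TensorProduct.tmul_add]
      abel

private def Δh : A K →ₐ[K] A K ⊗[K] A K :=
  RingQuot.liftAlgHom K ⟨ΔF K, Δrel K⟩

private lemma Δh_mk (x : FreeAlgebra K (Fin 5)) :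
    Δh K (RingQuot.mkAlgHom K (rel K) x) = ΔF K x :=
  RingQuot.liftAlgHom_mkAlgHom_apply _ _ _ _

private def εF : FreeAlgebra K (Fin 5) →ₐ[K] K :=
  FreeAlgebra.lift K ![(1 : K), 0, 0, 1, 1]

private lemma εF_a : εF K (a K) = 1 := by simp [εF, a]
private lemma εF_b : εF K (b K) = 0 := by simp [εF, b]
private lemma εF_c : εF K (c K) = 0 := by simp [εF, c]
private lemma εF_d : εF K (d K) = 1 := by simp [εF, d]
private lemma εF_e : εF K (e K) = 1 := by simp [εF, e]

private lemma εrel : ∀ ⦃x y⦄, rel K x y → εF K x = εF K y := by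
  intro x y h
  cases h <;>
    simp [map_mul, map_sub, map_one, εF_a, εF_b, εF_c, εF_d, εF_e]

private def εh : A K →ₐ[K] K :=
  RingQuot.liftAlgHom K ⟨εF K, εrel K⟩

private lemma εh_mk (x : FreeAlgebra K (Fin 5)) :
    εh K (RingQuot.mkAlgHom K (rel K) x) = εF K x :=
  RingQuot.liftAlgHom_mkAlgHom_apply _ _ _ _
private def SF : FreeAlgebra K (Fin 5) →ₐ[K] (A K)ᵐᵒᵖ :=
  FreeAlgebra.lift K
    ![MulOpposite.op (e1 K * d1 K),
      MulOpposite.op (-(e1 K * b1 K)),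
      MulOpposite.op (-(e1 K * c1 K)),
      MulOpposite.op (e1 K * a1 K),
      MulOpposite.op (a1 K * d1 K - c1 K * b1 K)]

private lemma SF_a : SF K (a K) = MulOpposite.op (e1 K * d1 K) := by simp [SF, a]
private lemma SF_b : SF K (b K) = MulOpposite.op (-(e1 K * b1 K)) := by simp [SF, b]
private lemma SF_c : SF K (c K) = MulOpposite.op (-(e1 K * c1 K)) := by simp [SF, c]
private lemma SF_d : SF K (d K) = MulOpposite.op (e1 K * a1 K) := by simp [SF, d]
private lemma SF_e : SF K (e K) = MulOpposite.op (a1 K * d1 K - c1 K * b1 K) := by simp [SF, e]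

private lemma Srel : ∀ ⦃x y⦄, rel K x y → SF K x = SF K y := by
  intro x y h
  cases h with
  | ac_comm =>
      apply MulOpposite.unop_injective
      simp only [map_mul, SF_a, SF_c, MulOpposite.unop_mul, MulOpposite.unop_op]
      calc -(e1 K * c1 K) * (e1 K * d1 K)
          = -(e1 K * (c1 K * e1 K * d1 K)) := by simp only [nmul, muln, neg_neg, sub_mul, mul_sub, mul_assoc, one_mul, mul_one] <;> abel
        _ = -(e1 K * (d1 K * e1 K * c1 K)) := by rw [hced]
        _ = e1 K * d1 K * -(e1 K * c1 K) := by simp only [nmul, muln, neg_neg, sub_mul, mul_sub, mul_assoc, one_mul, mul_one] <;> abel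
  | bd_comm =>
      apply MulOpposite.unop_injective
      simp only [map_mul, SF_b, SF_d, MulOpposite.unop_mul, MulOpposite.unop_op]
      calc e1 K * a1 K * -(e1 K * b1 K)
          = -(e1 K * (a1 K * e1 K * b1 K)) := by simp only [nmul, muln, neg_neg, sub_mul, mul_sub, mul_assoc, one_mul, mul_one] <;> abel
        _ = -(e1 K * (b1 K * e1 K * a1 K)) := by rw [hbea]
        _ = -(e1 K * b1 K) * (e1 K * a1 K) := by simp only [nmul, muln, neg_neg, sub_mul, mul_sub, mul_assoc, one_mul, mul_one] <;> abel
  | det_eq =>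
      apply MulOpposite.unop_injective
      simp only [map_mul, map_sub, SF_a, SF_b, SF_c, SF_d, MulOpposite.unop_mul,
        MulOpposite.unop_sub, MulOpposite.unop_op]
      calc e1 K * a1 K * (e1 K * d1 K) - -(e1 K * b1 K) * -(e1 K * c1 K)
          = e1 K * (a1 K * e1 K * d1 K - b1 K * e1 K * c1 K) := by simp only [nmul, muln, neg_neg, sub_mul, mul_sub, mul_assoc, one_mul, mul_one] <;> abel
        _ = e1 K * 1 := by rw [haed]
        _ = e1 K * (d1 K * e1 K * a1 K - c1 K * e1 K * b1 K) := by rw [hdea]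
        _ = e1 K * d1 K * (e1 K * a1 K) - -(e1 K * c1 K) * -(e1 K * b1 K) := by simp only [nmul, muln, neg_neg, sub_mul, mul_sub, mul_assoc, one_mul, mul_one] <;> abel
  | det_e =>
      apply MulOpposite.unop_injective
      simp only [map_mul, map_sub, map_one, SF_a, SF_b, SF_c, SF_d, SF_e,
        MulOpposite.unop_mul, MulOpposite.unop_sub, MulOpposite.unop_op, MulOpposite.unop_one]
      calc (a1 K * d1 K - c1 K * b1 K) *
            (e1 K * a1 K * (e1 K * d1 K) - -(e1 K * b1 K) * -(e1 K * c1 K))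
          = (a1 K * d1 K - c1 K * b1 K) *
              (e1 K * (a1 K * e1 K * d1 K - b1 K * e1 K * c1 K)) := by simp only [nmul, muln, neg_neg, sub_mul, mul_sub, mul_assoc, one_mul, mul_one] <;> abel
        _ = (a1 K * d1 K - c1 K * b1 K) * (e1 K * 1) := by rw [haed]
        _ = (a1 K * d1 K - c1 K * b1 K) * e1 K := by rw [mul_one]
        _ = 1 := hde K
  | e_det =>
      apply MulOpposite.unop_injective
      simp only [map_mul, map_sub, map_one, SF_a, SF_b, SF_c, SF_d, SF_e,
        MulOpposite.unop_mul, MulOpposite.unop_sub, MulOpposite.unop_op, MulOpposite.unop_one]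
      calc (e1 K * a1 K * (e1 K * d1 K) - -(e1 K * b1 K) * -(e1 K * c1 K)) *
            (a1 K * d1 K - c1 K * b1 K)
          = e1 K * (a1 K * e1 K * d1 K - b1 K * e1 K * c1 K) *
              (a1 K * d1 K - c1 K * b1 K) := by simp only [nmul, muln, neg_neg, sub_mul, mul_sub, mul_assoc, one_mul, mul_one] <;> abel
        _ = e1 K * 1 * (a1 K * d1 K - c1 K * b1 K) := by rw [haed]
        _ = e1 K * (a1 K * d1 K - c1 K * b1 K) := by rw [mul_one]
        _ = 1 := hed K
  | aed_bec =>
      apply MulOpposite.unop_injective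
      simp only [map_mul, map_sub, map_one, SF_a, SF_b, SF_c, SF_d, SF_e,
        MulOpposite.unop_mul, MulOpposite.unop_sub, MulOpposite.unop_op, MulOpposite.unop_one]
      calc e1 K * a1 K * ((a1 K * d1 K - c1 K * b1 K) * (e1 K * d1 K)) -
            -(e1 K * c1 K) * ((a1 K * d1 K - c1 K * b1 K) * -(e1 K * b1 K))
          = e1 K * (a1 K * ((a1 K * d1 K - c1 K * b1 K) * e1 K * d1 K)) -
              e1 K * (c1 K * ((a1 K * d1 K - c1 K * b1 K) * e1 K * b1 K)) := by simp only [nmul, muln, neg_neg, sub_mul, mul_sub, mul_assoc, one_mul, mul_one] <;> abel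
        _ = e1 K * (a1 K * (1 * d1 K)) - e1 K * (c1 K * (1 * b1 K)) := by rw [hde]
        _ = e1 K * (a1 K * d1 K - c1 K * b1 K) := by simp only [nmul, muln, neg_neg, sub_mul, mul_sub, mul_assoc, one_mul, mul_one] <;> abel
        _ = 1 := hed K
  | dea_ceb =>
      apply MulOpposite.unop_injective
      simp only [map_mul, map_sub, map_one, SF_a, SF_b, SF_c, SF_d, SF_e,
        MulOpposite.unop_mul, MulOpposite.unop_sub, MulOpposite.unop_op, MulOpposite.unop_one]
      calc e1 K * d1 K * ((a1 K * d1 K - c1 K * b1 K) * (e1 K * a1 K)) -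
            -(e1 K * b1 K) * ((a1 K * d1 K - c1 K * b1 K) * -(e1 K * c1 K))
          = e1 K * (d1 K * ((a1 K * d1 K - c1 K * b1 K) * e1 K * a1 K)) -
              e1 K * (b1 K * ((a1 K * d1 K - c1 K * b1 K) * e1 K * c1 K)) := by simp only [nmul, muln, neg_neg, sub_mul, mul_sub, mul_assoc, one_mul, mul_one] <;> abel
        _ = e1 K * (d1 K * (1 * a1 K)) - e1 K * (b1 K * (1 * c1 K)) := by rw [hde]
        _ = e1 K * (d1 K * a1 K - b1 K * c1 K) := by simp only [nmul, muln, neg_neg, sub_mul, mul_sub, mul_assoc, one_mul, mul_one] <;> abel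
        _ = e1 K * (a1 K * d1 K - c1 K * b1 K) := by rw [hdet]
        _ = 1 := hed K
  | bea_aeb =>
      apply MulOpposite.unop_injective
      simp only [map_mul, SF_a, SF_b, SF_e, MulOpposite.unop_mul, MulOpposite.unop_op]
      calc e1 K * d1 K * ((a1 K * d1 K - c1 K * b1 K) * -(e1 K * b1 K))
          = -(e1 K * (d1 K * ((a1 K * d1 K - c1 K * b1 K) * e1 K * b1 K))) := by simp only [nmul, muln, neg_neg, sub_mul, mul_sub, mul_assoc, one_mul, mul_one] <;> abel
        _ = -(e1 K * (d1 K * (1 * b1 K))) := by rw [hde]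
        _ = -(e1 K * (d1 K * b1 K)) := by rw [one_mul]
        _ = -(e1 K * (b1 K * d1 K)) := by rw [hbd]
        _ = -(e1 K * (b1 K * (1 * d1 K))) := by rw [one_mul]
        _ = -(e1 K * (b1 K * ((a1 K * d1 K - c1 K * b1 K) * e1 K * d1 K))) := by rw [hde]
        _ = -(e1 K * b1 K) * ((a1 K * d1 K - c1 K * b1 K) * (e1 K * d1 K)) := by simp only [nmul, muln, neg_neg, sub_mul, mul_sub, mul_assoc, one_mul, mul_one] <;> abel
  | ced_dec =>
      apply MulOpposite.unop_injective
      simp only [map_mul, SF_c, SF_d, SF_e, MulOpposite.unop_mul, MulOpposite.unop_op]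
      calc e1 K * a1 K * ((a1 K * d1 K - c1 K * b1 K) * -(e1 K * c1 K))
          = -(e1 K * (a1 K * ((a1 K * d1 K - c1 K * b1 K) * e1 K * c1 K))) := by simp only [nmul, muln, neg_neg, sub_mul, mul_sub, mul_assoc, one_mul, mul_one] <;> abel
        _ = -(e1 K * (a1 K * (1 * c1 K))) := by rw [hde]
        _ = -(e1 K * (a1 K * c1 K)) := by rw [one_mul]
        _ = -(e1 K * (c1 K * a1 K)) := by rw [hac]
        _ = -(e1 K * (c1 K * (1 * a1 K))) := by rw [one_mul]
        _ = -(e1 K * (c1 K * ((a1 K * d1 K - c1 K * b1 K) * e1 K * a1 K))) := by rw [hde]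
        _ = -(e1 K * c1 K) * ((a1 K * d1 K - c1 K * b1 K) * (e1 K * a1 K)) := by simp only [nmul, muln, neg_neg, sub_mul, mul_sub, mul_assoc, one_mul, mul_one] <;> abel

private def Sh : A K →ₐ[K] (A K)ᵐᵒᵖ :=
  RingQuot.liftAlgHom K ⟨SF K, Srel K⟩

private lemma Sh_mk (x : FreeAlgebra K (Fin 5)) :
    Sh K (RingQuot.mkAlgHom K (rel K) x) = SF K x :=
  RingQuot.liftAlgHom_mkAlgHom_apply _ _ _ _

private def Sl : A K →ₗ[K] A K :=
  (MulOpposite.opLinearEquiv K).symm.toLinearMap ∘ₗ (Sh K).toLinearMap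

private lemma Sl_apply (x : A K) : Sl K x = MulOpposite.unop (Sh K x) := rfl

private lemma Sl_one : Sl K 1 = 1 := by simp [Sl_apply]

private lemma Sl_mul (x y : A K) : Sl K (x * y) = Sl K y * Sl K x := by
  simp [Sl_apply, map_mul]
private lemma Sl_a1 : Sl K (a1 K) = e1 K * d1 K := by
  simp [Sl_apply, a1, mk, Sh_mk, SF_a]
private lemma Sl_b1 : Sl K (b1 K) = -(e1 K * b1 K) := by
  simp [Sl_apply, b1, mk, Sh_mk, SF_b]
private lemma Sl_c1 : Sl K (c1 K) = -(e1 K * c1 K) := by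
  simp [Sl_apply, c1, mk, Sh_mk, SF_c]
private lemma Sl_d1 : Sl K (d1 K) = e1 K * a1 K := by
  simp [Sl_apply, d1, mk, Sh_mk, SF_d]
private lemma Sl_e1 : Sl K (e1 K) = a1 K * d1 K - c1 K * b1 K := by
  simp [Sl_apply, e1, mk, Sh_mk, SF_e]

private lemma gaL : e1 K * d1 K * a1 K + -(e1 K * b1 K) * c1 K = 1 := by
  rw [nmul, mul_assoc, mul_assoc, ← sub_eq_add_neg, ← mul_sub, ← hdet]; exact hed K
private lemma gaR : a1 K * (e1 K * d1 K) + b1 K * -(e1 K * c1 K) = 1 := by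
  rw [muln, ← sub_eq_add_neg, ← mul_assoc, ← mul_assoc]; exact haed K
private lemma gbL : e1 K * d1 K * b1 K + -(e1 K * b1 K) * d1 K = 0 := by
  rw [nmul, mul_assoc, mul_assoc, ← sub_eq_add_neg, ← mul_sub, hbd]
  simp
private lemma gbR : a1 K * -(e1 K * b1 K) + b1 K * (e1 K * a1 K) = 0 := by
  rw [muln, add_comm, ← sub_eq_add_neg, ← mul_assoc, ← mul_assoc, hbea]
  simp
private lemma gcL : -(e1 K * c1 K) * a1 K + e1 K * a1 K * c1 K = 0 := by
  rw [nmul, add_comm, ← sub_eq_add_neg, mul_assoc, mul_assoc, ← mul_sub, hac]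
  simp
private lemma gcR : c1 K * (e1 K * d1 K) + d1 K * -(e1 K * c1 K) = 0 := by
  rw [muln, ← sub_eq_add_neg, ← mul_assoc, ← mul_assoc, hced]
  simp
private lemma gdL : -(e1 K * c1 K) * b1 K + e1 K * a1 K * d1 K = 1 := by
  rw [nmul, add_comm, ← sub_eq_add_neg, mul_assoc, mul_assoc, ← mul_sub]; exact hed K
private lemma gdR : c1 K * -(e1 K * b1 K) + d1 K * (e1 K * a1 K) = 1 := by
  rw [muln, add_comm, ← sub_eq_add_neg, ← mul_assoc, ← mul_assoc]; exact hdea K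

private def Fl : A K ⊗[K] A K →ₗ[K] A K :=
  LinearMap.mul' K (A K) ∘ₗ TensorProduct.map (Sl K) LinearMap.id

private def Gl : A K ⊗[K] A K →ₗ[K] A K :=
  LinearMap.mul' K (A K) ∘ₗ TensorProduct.map LinearMap.id (Sl K)

private lemma Fl_tmul (x y : A K) : Fl K (x ⊗ₜ[K] y) = Sl K x * y := by
  simp [Fl, LinearMap.mul'_apply]

private lemma Gl_tmul (x y : A K) : Gl K (x ⊗ₜ[K] y) = x * Sl K y := by
  simp [Gl, LinearMap.mul'_apply]

private lemma Fl_mul_tmul (t : A K ⊗[K] A K) (y₁ y₂ : A K) :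
    Fl K (t * (y₁ ⊗ₜ[K] y₂)) = Sl K y₁ * Fl K t * y₂ := by
  induction t using TensorProduct.induction_on with
  | zero => simp
  | tmul x₁ x₂ =>
      simp only [Algebra.TensorProduct.tmul_mul_tmul, Fl_tmul, Sl_mul, mul_assoc]
  | add u v hu hv =>
      rw [add_mul, map_add, hu, hv, map_add, mul_add, add_mul]

private lemma Gl_tmul_mul (t : A K ⊗[K] A K) (x₁ x₂ : A K) :
    Gl K ((x₁ ⊗ₜ[K] x₂) * t) = x₁ * Gl K t * Sl K x₂ := by
  induction t using TensorProduct.induction_on with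
  | zero => simp
  | tmul y₁ y₂ =>
      simp only [Algebra.TensorProduct.tmul_mul_tmul, Gl_tmul, Sl_mul, mul_assoc]
  | add u v hu hv =>
      rw [mul_add, map_add, hu, hv, map_add, mul_add, add_mul]

private lemma Fl_conv (α : K) (t s : A K ⊗[K] A K) (h : Fl K t = α • 1) :
    Fl K (t * s) = α • Fl K s := by
  induction s using TensorProduct.induction_on with
  | zero => simp
  | tmul y₁ y₂ =>
      rw [Fl_mul_tmul, h, Fl_tmul, mul_smul_comm, smul_mul_assoc, mul_one]
  | add u v hu hv =>
      rw [mul_add, map_add, hu, hv, map_add, smul_add]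

private lemma Gl_conv (β : K) (t s : A K ⊗[K] A K) (h : Gl K s = β • 1) :
    Gl K (t * s) = β • Gl K t := by
  induction t using TensorProduct.induction_on with
  | zero => simp
  | tmul x₁ x₂ =>
      rw [Gl_tmul_mul, h, Gl_tmul, mul_smul_comm, smul_mul_assoc, mul_one]
  | add u v hu hv =>
      rw [add_mul, map_add, hu, hv, map_add, smul_add]

private lemma antipode_prop (x : A K) :
    Fl K (Δh K x) = εh K x • 1 ∧ Gl K (Δh K x) = εh K x • 1 := by
  obtain ⟨y, rfl⟩ := RingQuot.mkAlgHom_surjective K (rel K) x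
  induction y using FreeAlgebra.induction with
  | grade0 r =>
      constructor <;>
        simp [AlgHom.commutes, Algebra.TensorProduct.algebraMap_apply, Fl_tmul, Gl_tmul,
          Sl_one, Sl_apply, Algebra.algebraMap_eq_smul_one, Algebra.TensorProduct.one_def,
          Fl, Gl, LinearMap.mul'_apply, map_smul, smul_mul_assoc, mul_smul_comm]
  | grade1 i =>
      fin_cases i <;> constructor
      · -- a, left
        rw [Δh_mk, εh_mk]
        show Fl K (ΔF K (a K)) = εF K (a K) • 1
        rw [ΔF_a, εF_a, map_add,
          Fl_tmul, Fl_tmul, Sl_a1, Sl_b1, one_smul]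
        exact gaL K
      · rw [Δh_mk, εh_mk]
        show Gl K (ΔF K (a K)) = εF K (a K) • 1
        rw [ΔF_a, εF_a, map_add,
          Gl_tmul, Gl_tmul, Sl_a1, Sl_c1, one_smul]
        exact gaR K
      · rw [Δh_mk, εh_mk]
        show Fl K (ΔF K (b K)) = εF K (b K) • 1
        rw [ΔF_b, εF_b, map_add,
          Fl_tmul, Fl_tmul, Sl_a1, Sl_b1, zero_smul]
        exact gbL K
      · rw [Δh_mk, εh_mk]
        show Gl K (ΔF K (b K)) = εF K (b K) • 1
        rw [ΔF_b, εF_b, map_add,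
          Gl_tmul, Gl_tmul, Sl_b1, Sl_d1, zero_smul]
        exact gbR K
      · rw [Δh_mk, εh_mk]
        show Fl K (ΔF K (c K)) = εF K (c K) • 1
        rw [ΔF_c, εF_c, map_add,
          Fl_tmul, Fl_tmul, Sl_c1, Sl_d1, zero_smul]
        exact gcL K
      · rw [Δh_mk, εh_mk]
        show Gl K (ΔF K (c K)) = εF K (c K) • 1
        rw [ΔF_c, εF_c, map_add,
          Gl_tmul, Gl_tmul, Sl_a1, Sl_c1, zero_smul]
        exact gcR K
      · rw [Δh_mk, εh_mk]
        show Fl K (ΔF K (d K)) = εF K (d K) • 1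
        rw [ΔF_d, εF_d, map_add,
          Fl_tmul, Fl_tmul, Sl_c1, Sl_d1, one_smul]
        exact gdL K
      · rw [Δh_mk, εh_mk]
        show Gl K (ΔF K (d K)) = εF K (d K) • 1
        rw [ΔF_d, εF_d, map_add,
          Gl_tmul, Gl_tmul, Sl_b1, Sl_d1, one_smul]
        exact gdR K
      · rw [Δh_mk, εh_mk]
        show Fl K (ΔF K (e K)) = εF K (e K) • 1
        rw [ΔF_e, εF_e,
          Fl_tmul, Sl_e1, one_smul]
        exact hde K
      · rw [Δh_mk, εh_mk]
        show Gl K (ΔF K (e K)) = εF K (e K) • 1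
        rw [ΔF_e, εF_e,
          Gl_tmul, Sl_e1, one_smul]
        exact hed K
  | mul u v hu hv =>
      rw [map_mul, map_mul (Δh K), map_mul (εh K)]
      constructor
      · rw [Fl_conv K _ _ _ hu.1, hv.1, smul_smul]
      · rw [Gl_conv K _ _ _ hv.2, hu.2, smul_smul, mul_comm]
  | add u v hu hv =>
      rw [map_add, map_add (Δh K), map_add (εh K)]
      constructor
      · rw [map_add, hu.1, hv.1, ← add_smul]
      · rw [map_add, hu.2, hv.2, ← add_smul]
private lemma coassocAlg :
    (Algebra.TensorProduct.assoc K K K (A K) (A K) (A K)).toAlgHom.comp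
        ((Algebra.TensorProduct.map (Δh K) (AlgHom.id K (A K))).comp (Δh K)) =
      (Algebra.TensorProduct.map (AlgHom.id K (A K)) (Δh K)).comp (Δh K) := by
  refine RingQuot.ringQuot_ext' K _ _ (FreeAlgebra.hom_ext (funext fun i => ?_))
  fin_cases i <;>
    (simp [Δh_mk, ΔF, a1, b1, c1, d1, e1, mk, a, b, c, d, e, FreeAlgebra.lift_ι_apply,
      tmul_add, add_tmul]; try abel)

private lemma counitLAlg :
    (Algebra.TensorProduct.lid K (A K)).toAlgHom.comp
        ((Algebra.TensorProduct.map (εh K) (AlgHom.id K (A K))).comp (Δh K)) =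
      AlgHom.id K (A K) := by
  refine RingQuot.ringQuot_ext' K _ _ (FreeAlgebra.hom_ext (funext fun i => ?_))
  fin_cases i <;>
    simp [Δh_mk, εh_mk, ΔF, εF, a1, b1, c1, d1, e1, mk, a, b, c, d, e, FreeAlgebra.lift_ι_apply]

private lemma counitRAlg :
    (Algebra.TensorProduct.rid K K (A K)).toAlgHom.comp
        ((Algebra.TensorProduct.map (AlgHom.id K (A K)) (εh K)).comp (Δh K)) =
      AlgHom.id K (A K) := by
  refine RingQuot.ringQuot_ext' K _ _ (FreeAlgebra.hom_ext (funext fun i => ?_))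
  fin_cases i <;>
    simp [Δh_mk, εh_mk, ΔF, εF, a1, b1, c1, d1, e1, mk, a, b, c, d, e, FreeAlgebra.lift_ι_apply]

private lemma mapTL {B C D E : Type u} [Semiring B] [Semiring C] [Semiring D] [Semiring E]
    [Algebra K B] [Algebra K C] [Algebra K D] [Algebra K E]
    (f : B →ₐ[K] C) (g : D →ₐ[K] E) :
    (Algebra.TensorProduct.map f g).toLinearMap =
      TensorProduct.map f.toLinearMap g.toLinearMap :=
  TensorProduct.ext' fun _ _ => rfl

private lemma assocTL :
    (Algebra.TensorProduct.assoc K K K (A K) (A K) (A K)).toAlgHom.toLinearMap =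
      (TensorProduct.assoc K (A K) (A K) (A K)).toLinearMap := rfl

private lemma lidTL :
    (Algebra.TensorProduct.lid K (A K)).toAlgHom.toLinearMap =
      (TensorProduct.lid K (A K)).toLinearMap := rfl

private lemma ridTL :
    (Algebra.TensorProduct.rid K K (A K)).toAlgHom.toLinearMap =
      (TensorProduct.rid K (A K)).toLinearMap := by
  rw [← TensorProduct.AlgebraTensorModule.rid_eq_rid]; rfl

end AuxHopf

/-- The algebra `A = K⟨a,b,c,d,e⟩/(relations)` admits the structure of a Hopf algebra over `K`
with `Δ(a) = a⊗a + b⊗c`, `Δ(b) = a⊗b + b⊗d`, `Δ(c) = c⊗a + d⊗c`, `Δ(d) = c⊗b + d⊗d`,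
`Δ(e) = e⊗e`, `ε(a) = ε(d) = ε(e) = 1` and `ε(b) = ε(c) = 0`: there are algebra maps
`Δ : A → A ⊗ A` and `ε : A → K` and a linear map `S : A → A` satisfying coassociativity,
the counit axioms and the antipode axioms, together with the formulas above.
This Hopf algebra is `aut(K[x,y])`, with `e` playing the role of the inverse of the
quantum determinant `δ = ad − cb`. -/
theorem hopf :
    ∃ (Δ : A K →ₐ[K] A K ⊗[K] A K) (ε : A K →ₐ[K] K) (S : A K →ₗ[K] A K),
      -- coassociativity
      (TensorProduct.assoc K _ _ _).toLinearMap.comp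
          ((TensorProduct.map Δ.toLinearMap LinearMap.id).comp Δ.toLinearMap) =
        (TensorProduct.map LinearMap.id Δ.toLinearMap).comp Δ.toLinearMap ∧
      -- left and right counit axioms
      (TensorProduct.lid K _).toLinearMap.comp
          ((TensorProduct.map ε.toLinearMap LinearMap.id).comp Δ.toLinearMap) =
        LinearMap.id ∧
      (TensorProduct.rid K _).toLinearMap.comp
          ((TensorProduct.map LinearMap.id ε.toLinearMap).comp Δ.toLinearMap) =
        LinearMap.id ∧
      -- antipode axioms: `m ∘ (S ⊗ id) ∘ Δ = η ∘ ε = m ∘ (id ⊗ S) ∘ Δ`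
      (LinearMap.mul' K (A K)).comp
          ((TensorProduct.map S LinearMap.id).comp Δ.toLinearMap) =
        (Algebra.linearMap K (A K)).comp ε.toLinearMap ∧
      (LinearMap.mul' K (A K)).comp
          ((TensorProduct.map LinearMap.id S).comp Δ.toLinearMap) =
        (Algebra.linearMap K (A K)).comp ε.toLinearMap ∧
      -- the comultiplication on generators
      Δ (mk K (a K)) = mk K (a K) ⊗ₜ[K] mk K (a K) + mk K (b K) ⊗ₜ[K] mk K (c K) ∧
      Δ (mk K (b K)) = mk K (a K) ⊗ₜ[K] mk K (b K) + mk K (b K) ⊗ₜ[K] mk K (d K) ∧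
      Δ (mk K (c K)) = mk K (c K) ⊗ₜ[K] mk K (a K) + mk K (d K) ⊗ₜ[K] mk K (c K) ∧
      Δ (mk K (d K)) = mk K (c K) ⊗ₜ[K] mk K (b K) + mk K (d K) ⊗ₜ[K] mk K (d K) ∧
      Δ (mk K (e K)) = mk K (e K) ⊗ₜ[K] mk K (e K) ∧
      -- the counit on generators
      ε (mk K (a K)) = 1 ∧ ε (mk K (b K)) = 0 ∧ ε (mk K (c K)) = 0 ∧
      ε (mk K (d K)) = 1 ∧ ε (mk K (e K)) = 1 := by
  refine ⟨Δh K, εh K, Sl K, ?_, ?_, ?_, ?_, ?_, ?_, ?_, ?_, ?_, ?_, ?_, ?_, ?_, ?_, ?_⟩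
  · have h := congrArg AlgHom.toLinearMap (coassocAlg K)
    simp only [AlgHom.comp_toLinearMap, mapTL, AlgHom.toLinearMap_id, assocTL] at h
    exact h
  · have h := congrArg AlgHom.toLinearMap (counitLAlg K)
    simp only [AlgHom.comp_toLinearMap, mapTL, AlgHom.toLinearMap_id, lidTL] at h
    exact h
  · have h := congrArg AlgHom.toLinearMap (counitRAlg K)
    simp only [AlgHom.comp_toLinearMap, mapTL, AlgHom.toLinearMap_id, ridTL] at h
    exact h
  · refine LinearMap.ext fun x => ?_
    have h := (antipode_prop K x).1
    simpa [Fl, Algebra.algebraMap_eq_smul_one] using h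
  · refine LinearMap.ext fun x => ?_
    have h := (antipode_prop K x).2
    simpa [Gl, Algebra.algebraMap_eq_smul_one] using h
  · have h := Δh_mk K (a K); rw [ΔF_a] at h
    simpa [mk, a1, b1, c1] using h
  · have h := Δh_mk K (b K); rw [ΔF_b] at h
    simpa [mk, a1, b1, d1] using h
  · have h := Δh_mk K (c K); rw [ΔF_c] at h
    simpa [mk, a1, c1, d1] using h
  · have h := Δh_mk K (d K); rw [ΔF_d] at h
    simpa [mk, b1, c1, d1] using h
  · have h := Δh_mk K (e K); rw [ΔF_e] at h
    simpa [mk, e1] using h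
  · have h := εh_mk K (a K); rw [εF_a] at h
    simpa [mk] using h
  · have h := εh_mk K (b K); rw [εF_b] at h
    simpa [mk] using h
  · have h := εh_mk K (c K); rw [εF_c] at h
    simpa [mk] using h
  · have h := εh_mk K (d K); rw [εF_d] at h
    simpa [mk] using h
  · have h := εh_mk K (e K); rw [εF_e] at h
    simpa [mk] using h

end UAutPoly
end

section
/- Let K be an algebraically closed field of characteristic p > 0, and let GL₂(K) act on the space Sym^p(V) of homogeneous polynomials of degree p in K[X₀, X₁] by linear substitution σ_g(Xᵢ) = Σⱼ gᵢⱼ Xⱼ. Then the invariant subspace L spanned by X₀^p and X₁^p is not a direct summand of Sym^p(V) as a representation: there is no K-subspace W of the degree-p homogeneous component that is invariant under σ_g for all g ∈ GL₂(K) and satisfies L ∩ W = 0 and L + W equal to the whole degree-p homogeneous component. In particular Sym^p(V) is not a semisimple representation of GL₂(K). -/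
open MvPolynomial

universe u

variable (K : Type u) [Field K]

/-- The action of `g ∈ GL₂(K)` on `K[X₀, X₁]` by linear substitution
`σ_g(Xᵢ) = Σⱼ gᵢⱼ Xⱼ`. -/
noncomputable def linSubst (g : Matrix.GeneralLinearGroup (Fin 2) K) :
    MvPolynomial (Fin 2) K →ₐ[K] MvPolynomial (Fin 2) K :=
  aeval (fun i => ∑ j, C ((g : Matrix (Fin 2) (Fin 2) K) i j) * X j)

/-- The subspace of `K[X₀, X₁]` spanned by `X₀^p` and `X₁^p`. -/
noncomputable def Lsub (p : ℕ) : Submodule K (MvPolynomial (Fin 2) K) :=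
  Submodule.span K {X 0 ^ p, X 1 ^ p}

/-- In an infinite field, for `n > 0` there is a nonzero `t` with `t ^ n ≠ 1`. -/
lemma exists_pow_ne_one' {K : Type*} [Field K] [Infinite K] (n : ℕ) (hn : 0 < n) :
    ∃ t : K, t ≠ 0 ∧ t ^ n ≠ 1 := by
  by_contra h
  push_neg at h
  have hq : (Polynomial.X ^ n - 1 : Polynomial K) ≠ 0 := by
    intro he
    have := congrArg (Polynomial.eval 0) he
    simp [hn.ne', zero_pow] at this
  have hfin := Polynomial.finite_setOf_isRoot hq
  have hsub : (Set.univ : Set K) ⊆ {x | Polynomial.IsRoot (Polynomial.X ^ n - 1) x} ∪ {0} := by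
    intro x _
    rcases eq_or_ne x 0 with rfl | hx
    · exact Or.inr rfl
    · exact Or.inl (by simp [Polynomial.IsRoot, h x hx])
  exact Set.infinite_univ ((hfin.union (Set.finite_singleton 0)).subset hsub)

/-- The diagonal matrix `diag(t, 1)` as an element of `GL₂(K)`. -/
noncomputable def diagGL {K : Type u} [Field K] (t : K) (ht : t ≠ 0) :
    Matrix.GeneralLinearGroup (Fin 2) K :=
  Matrix.GeneralLinearGroup.mkOfDetNeZero !![t, 0; 0, 1]
    (by simp [Matrix.det_fin_two_of, ht])

/-- The unipotent matrix `[[1,1],[0,1]]` as an element of `GL₂(K)`. -/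
noncomputable def uniGL (K : Type u) [Field K] : Matrix.GeneralLinearGroup (Fin 2) K :=
  Matrix.GeneralLinearGroup.mkOfDetNeZero !![1, 1; 0, 1]
    (by simp [Matrix.det_fin_two_of])

lemma linSubst_diag {K : Type u} [Field K] (t : K) (ht : t ≠ 0) (a b : ℕ) :
    linSubst K (diagGL t ht) (X 0 ^ a * X 1 ^ b) = (t ^ a) • (X 0 ^ a * X 1 ^ b) := by
  have hc : ((diagGL t ht : Matrix.GeneralLinearGroup (Fin 2) K) :
      Matrix (Fin 2) (Fin 2) K) = !![t, 0; 0, 1] := rfl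
  simp [linSubst, hc, Fin.sum_univ_two, smul_eq_C_mul, mul_pow, C_pow]
  ring

lemma linSubst_uni {K : Type u} [Field K] (n : ℕ) :
    linSubst K (uniGL K) (X 0 ^ n * X 1) = (X 0 + X 1) ^ n * X 1 := by
  have hc : ((uniGL K : Matrix.GeneralLinearGroup (Fin 2) K) :
      Matrix (Fin 2) (Fin 2) K) = !![1, 1; 0, 1] := rfl
  simp [linSubst, hc, Fin.sum_univ_two]

lemma coeffs_eq {K : Type u} [Field K] (p : ℕ) (hp : p ≠ 0) (c₀ c₁ d₀ d₁ : K)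
    (h : c₀ • (X 0 ^ p : MvPolynomial (Fin 2) K) + c₁ • X 1 ^ p
      = d₀ • X 0 ^ p + d₁ • X 1 ^ p) :
    c₀ = d₀ ∧ c₁ = d₁ := by
  constructor
  · have := congrArg (coeff (Finsupp.single 0 p)) h
    simpa [coeff_smul, coeff_X_pow, Finsupp.single_eq_single_iff, hp] using this
  · have := congrArg (coeff (Finsupp.single 1 p)) h
    simpa [coeff_smul, coeff_X_pow, Finsupp.single_eq_single_iff, hp] using this

lemma binom_expand {K : Type u} [Field K] (p : ℕ) (hp : 2 ≤ p) :
    (X 0 + X 1 : MvPolynomial (Fin 2) K) ^ (p - 1) * X 1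
      = X 1 ^ p + ∑ k ∈ Finset.range (p - 1),
          (((p - 1).choose (k + 1) : ℕ) : MvPolynomial (Fin 2) K)
            * (X 0 ^ (k + 1) * X 1 ^ (p - (k + 1))) := by
  rw [add_pow, Finset.sum_mul, Finset.sum_range_succ', add_comm]
  congr 1
  · simp
    rw [← pow_succ, show p - 1 + 1 = p from by omega]
  · refine Finset.sum_congr rfl fun k hk => ?_
    have hk' : k < p - 1 := Finset.mem_range.mp hk
    rw [show p - (k + 1) = (p - 1 - (k + 1)) + 1 from by omega]
    ring

/-- Over an algebraically closed field of characteristic `p > 0`, the invariant subspace `L`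
spanned by `X₀^p, X₁^p` is not a direct summand of `Sym^p(K²)` as a `GL₂(K)`-representation:
there is no `GL₂(K)`-invariant subspace `W` of the degree-`p` homogeneous component with
`L ∩ W = 0` and `L + W` the whole degree-`p` homogeneous component. In particular
`Sym^p(K²)` is not a semisimple representation of `GL₂(K)`. -/
theorem span_frobenius_powers_not_direct_summand (p : ℕ) (hp : 0 < p) [CharP K p]
    [IsAlgClosed K] :
    ¬ ∃ W : Submodule K (MvPolynomial (Fin 2) K),
        W ≤ homogeneousSubmodule (Fin 2) K p ∧
        (∀ (g : Matrix.GeneralLinearGroup (Fin 2) K) (f : MvPolynomial (Fin 2) K),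
          f ∈ W → linSubst K g f ∈ W) ∧
        Lsub K p ⊓ W = ⊥ ∧
        Lsub K p ⊔ W = homogeneousSubmodule (Fin 2) K p := by
  rintro ⟨W, hWhom, hWinv, hinf, hsup⟩
  have hprime : p.Prime := (CharP.char_is_prime_or_zero K p).resolve_right (by omega)
  have h2 : 2 ≤ p := hprime.two_le
  have hp0 : p ≠ 0 := by omega
  -- every "middle" monomial lies in W
  have key : ∀ a : ℕ, 1 ≤ a → a ≤ p - 1 →
      (X 0 ^ a * X 1 ^ (p - a) : MvPolynomial (Fin 2) K) ∈ W := by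
    intro a ha1 ha2
    set m : MvPolynomial (Fin 2) K := X 0 ^ a * X 1 ^ (p - a) with hm
    have hmhom : m ∈ homogeneousSubmodule (Fin 2) K p := by
      rw [mem_homogeneousSubmodule]
      have h := ((isHomogeneous_X K (0 : Fin 2)).pow a).mul
        ((isHomogeneous_X K (1 : Fin 2)).pow (p - a))
      have he : 1 * a + 1 * (p - a) = p := by omega
      rwa [he] at h
    rw [← hsup] at hmhom
    obtain ⟨ℓ, hℓ, w, hw, hlw⟩ := Submodule.mem_sup.mp hmhom
    obtain ⟨c₀, c₁, hc⟩ := Submodule.mem_span_pair.mp hℓ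
    -- the weight argument: for all t ≠ 0, linSubst (diag t 1) ℓ = t^a • ℓ
    have step : ∀ t : K, t ≠ 0 → c₀ * t ^ p = t ^ a * c₀ ∧ c₁ = t ^ a * c₁ := by
      intro t ht
      have e1 : linSubst K (diagGL t ht) m = (t ^ a) • m := linSubst_diag t ht a (p - a)
      have e2 : linSubst K (diagGL t ht) ℓ
          = (c₀ * t ^ p) • (X 0 ^ p : MvPolynomial (Fin 2) K) + c₁ • X 1 ^ p := by
        rw [← hc]
        have e0 := linSubst_diag t ht p 0
        have e1' := linSubst_diag t ht 0 p
        simp only [pow_zero, mul_one, one_mul] at e0 e1'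
        rw [map_add, map_smul, map_smul, e0, e1']
        simp [smul_smul, mul_comm]
      have happ := congrArg (linSubst K (diagGL t ht)) hlw
      rw [map_add, e1, e2] at happ
      -- t^a • m = t^a • ℓ + t^a • w
      have hsplit : (t ^ a) • m = (t ^ a) • ℓ + (t ^ a) • w := by
        rw [← smul_add, hlw]
      -- difference lies in Lsub ⊓ W
      have hdiff : ((c₀ * t ^ p) • (X 0 ^ p : MvPolynomial (Fin 2) K) + c₁ • X 1 ^ p)
          - (t ^ a) • ℓ = (t ^ a) • w - linSubst K (diagGL t ht) w := by
        have := happ.trans hsplit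
        linear_combination (norm := module) this
      have hinL : ((c₀ * t ^ p) • (X 0 ^ p : MvPolynomial (Fin 2) K) + c₁ • X 1 ^ p)
          - (t ^ a) • ℓ ∈ Lsub K p := by
        apply Submodule.sub_mem
        · exact Submodule.add_mem _
            (Submodule.smul_mem _ _ (Submodule.subset_span (by simp)))
            (Submodule.smul_mem _ _ (Submodule.subset_span (by simp)))
        · exact Submodule.smul_mem _ _ hℓ
      have hinW : ((c₀ * t ^ p) • (X 0 ^ p : MvPolynomial (Fin 2) K) + c₁ • X 1 ^ p)
          - (t ^ a) • ℓ ∈ W := by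
        rw [hdiff]
        exact Submodule.sub_mem _ (Submodule.smul_mem _ _ hw) (hWinv _ _ hw)
      have hz : ((c₀ * t ^ p) • (X 0 ^ p : MvPolynomial (Fin 2) K) + c₁ • X 1 ^ p)
          - (t ^ a) • ℓ = 0 := by
        have : _ ∈ Lsub K p ⊓ W := ⟨hinL, hinW⟩
        rwa [hinf, Submodule.mem_bot] at this
      have heq : (c₀ * t ^ p) • (X 0 ^ p : MvPolynomial (Fin 2) K) + c₁ • X 1 ^ p
          = (t ^ a * c₀) • X 0 ^ p + (t ^ a * c₁) • X 1 ^ p := by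
        rw [sub_eq_zero] at hz
        rw [hz, ← hc]
        module
      exact coeffs_eq p hp0 _ _ _ _ heq
    -- deduce c₀ = 0
    have hc₀ : c₀ = 0 := by
      obtain ⟨t, ht, htn⟩ := exists_pow_ne_one' (K := K) (p - a) (by omega)
      by_contra hne
      have h1 := (step t ht).1
      have hpw : t ^ p = t ^ a * t ^ (p - a) := by
        rw [← pow_add]; congr 1; omega
      rw [hpw] at h1
      have hta : c₀ * t ^ a ≠ 0 := mul_ne_zero hne (pow_ne_zero _ ht)
      apply htn
      have h2' : (c₀ * t ^ a) * t ^ (p - a) = (c₀ * t ^ a) * 1 := by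
        rw [mul_one]; linear_combination h1
      exact mul_left_cancel₀ hta h2'
    -- deduce c₁ = 0
    have hc₁ : c₁ = 0 := by
      obtain ⟨t, ht, htn⟩ := exists_pow_ne_one' (K := K) a (by omega)
      by_contra hne
      have h1 := (step t ht).2
      apply htn
      have : t ^ a * c₁ = 1 * c₁ := by rw [one_mul, ← h1]
      exact mul_right_cancel₀ hne this
    have hℓ0 : ℓ = 0 := by rw [← hc, hc₀, hc₁]; simp
    rw [hℓ0, zero_add] at hlw
    rwa [← hlw]
  -- now derive the contradiction using the unipotent element
  have hvW : (X 0 ^ (p - 1) * X 1 : MvPolynomial (Fin 2) K) ∈ W := by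
    have := key (p - 1) (by omega) le_rfl
    rwa [show p - (p - 1) = 1 from by omega, pow_one] at this
  have hσ := hWinv (uniGL K) _ hvW
  rw [linSubst_uni, binom_expand p h2] at hσ
  have hX1W : (X 1 ^ p : MvPolynomial (Fin 2) K) ∈ W := by
    have hsum : (∑ k ∈ Finset.range (p - 1),
        (((p - 1).choose (k + 1) : ℕ) : MvPolynomial (Fin 2) K)
          * (X 0 ^ (k + 1) * X 1 ^ (p - (k + 1)))) ∈ W := by
      apply Submodule.sum_mem
      intro k hk
      have hk' : k < p - 1 := Finset.mem_range.mp hk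
      have hmem := key (k + 1) (by omega) (by omega)
      rw [← nsmul_eq_mul]
      exact nsmul_mem hmem _
    have : (X 1 ^ p : MvPolynomial (Fin 2) K)
        = (X 1 ^ p + ∑ k ∈ Finset.range (p - 1),
            (((p - 1).choose (k + 1) : ℕ) : MvPolynomial (Fin 2) K)
              * (X 0 ^ (k + 1) * X 1 ^ (p - (k + 1))))
          - ∑ k ∈ Finset.range (p - 1),
            (((p - 1).choose (k + 1) : ℕ) : MvPolynomial (Fin 2) K)
              * (X 0 ^ (k + 1) * X 1 ^ (p - (k + 1))) := by ring
    rw [this]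
    exact Submodule.sub_mem _ hσ hsum
  have hX1L : (X 1 ^ p : MvPolynomial (Fin 2) K) ∈ Lsub K p :=
    Submodule.subset_span (by simp)
  have hz : (X 1 ^ p : MvPolynomial (Fin 2) K) = 0 := by
    have : _ ∈ Lsub K p ⊓ W := ⟨hX1L, hX1W⟩
    rwa [hinf, Submodule.mem_bot] at this
  exact pow_ne_zero p (X_ne_zero 1) hz
end
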